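/- arXiv:2012.02418 — 2 statements merged into one kernel-verified Lean document; each statement's English description precedes it below -/
import Mathlib

section
/- Let X be a proper complete CAT(0) space and ζ, η two distinct points of the visual boundary ∂X. If there exists a geodesic ray c with the bounded geodesic image property such that c(∞) = ζ, then there exists a geodesic line l : (−∞, ∞) → X with l(−∞) = ζ and l(∞) = η. In other words, ζ is a visibility point of ∂X. -/
open Metric Set Filter

variable {X : Type*} [MetricSpace X]

/-- A unit-speed geodesic ray, defined on `[0,∞)`. -/
def IsGeodesicRay (c : ℝ → X) : Prop :=
  ∀ s t : ℝ, 0 ≤ s → 0 ≤ t → dist (c s) (c t) = |s - t|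

/-- The image of a geodesic ray, i.e. `c([0,∞))`. -/
def rayImage (c : ℝ → X) : Set X := c '' Set.Ici (0 : ℝ)

/-- A geodesic segment from `x` to `y`, parametrized proportionally to arc length on `[0,1]`. -/
def IsGeodesicSegment (γ : ℝ → X) (x y : X) : Prop :=
  γ 0 = x ∧ γ 1 = y ∧
  ∀ s ∈ Set.Icc (0:ℝ) 1, ∀ t ∈ Set.Icc (0:ℝ) 1,
    dist (γ s) (γ t) = |s - t| * dist x y

/-- A geodesic metric space: any two points are joined by a geodesic segment. -/
def GeodesicSpace (X : Type*) [MetricSpace X] : Prop :=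
  ∀ x y : X, ∃ γ : ℝ → X, IsGeodesicSegment γ x y

/-- CAT(0): a geodesic space satisfying the (CN-type) comparison inequality
`d(z,γ(t))² ≤ (1-t)d(z,x)² + t d(z,y)² - t(1-t)d(x,y)²` along all geodesics,
which is equivalent to the Euclidean comparison-triangle definition. -/
def CAT0Space (X : Type*) [MetricSpace X] : Prop :=
  GeodesicSpace X ∧
  ∀ (γ : ℝ → X) (x y : X), IsGeodesicSegment γ x y →
    ∀ z : X, ∀ t ∈ Set.Icc (0:ℝ) 1,
      dist z (γ t) ^ 2 ≤
        (1 - t) * dist z x ^ 2 + t * dist z y ^ 2 - t * (1 - t) * dist x y ^ 2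

/-- Convex subset: contains every geodesic segment between two of its points. -/
def ConvexSubset (C : Set X) : Prop :=
  ∀ x ∈ C, ∀ y ∈ C, ∀ γ : ℝ → X, IsGeodesicSegment γ x y →
    ∀ t ∈ Set.Icc (0:ℝ) 1, γ t ∈ C

/-- The Busemann function of a ray `c`:
`b_c(x) = lim_{t→∞} [d(x,c(t)) - t]`, realized as the infimum of the
non-increasing quantity `d(x,c(t)) - t` over `t ≥ 0`. -/
noncomputable def busemann (c : ℝ → X) (x : X) : ℝ :=
  ⨅ t : Set.Ici (0:ℝ), (dist x (c (t : ℝ)) - (t : ℝ))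

/-- `proj` is a nearest-point projection onto the set `A`. -/
def IsProjOnto (proj : X → X) (A : Set X) : Prop :=
  ∀ x : X, proj x ∈ A ∧ ∀ y ∈ A, dist x (proj x) ≤ dist x y

/-- A sublinear function `κ : [0,∞) → [1,∞)` with `κ(t)/t → 0`. -/
def Sublinear (κ : ℝ → ℝ) : Prop :=
  (∀ t : ℝ, 0 ≤ t → 1 ≤ κ t) ∧
  Tendsto (fun t => κ t / t) atTop (nhds 0)

/-- `c` is `κ`-contracting (w.r.t. the nearest-point projection `proj` onto `c`,
basepoint `o`): every ball disjoint from `c` projects to a set of diameter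
at most `n·κ(‖center‖)`. -/
def KappaContracting (o : X) (c : ℝ → X) (proj : X → X) (κ : ℝ → ℝ) : Prop :=
  ∃ n : ℝ, 0 ≤ n ∧ ∀ (x : X) (r : ℝ), 0 < r →
    Metric.closedBall x r ∩ rayImage c = ∅ →
    Metric.diam (proj '' Metric.closedBall x r) ≤ n * κ (dist o x)

/-- Bounded geodesic image property of the ray `c` (w.r.t. projection `proj`):
for every geodesic ray `c'` with the same start point there is `n ≥ 0` such that
every ball centered on `c'` and disjoint from `c` projects to a set of diameter ≤ `n`. -/
def BGIP (c : ℝ → X) (proj : X → X) : Prop :=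
  ∀ c' : ℝ → X, IsGeodesicRay c' → c' 0 = c 0 →
    ∃ n : ℝ, 0 ≤ n ∧ ∀ (s r : ℝ), 0 ≤ s →
      Metric.closedBall (c' s) r ∩ rayImage c = ∅ →
      Metric.diam (proj '' Metric.closedBall (c' s) r) ≤ n

/-- Two rays are asymptotic (define the same boundary point). -/
def Asymptotic (c c' : ℝ → X) : Prop :=
  ∃ M : ℝ, ∀ t : ℝ, 0 ≤ t → dist (c t) (c' t) ≤ M

/-- `h` is convex along geodesics. -/
def ConvexAlongGeodesics (h : X → ℝ) : Prop :=
  ∀ (γ : ℝ → X) (x y : X), IsGeodesicSegment γ x y →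
    ∀ s ∈ Set.Icc (0:ℝ) 1, h (γ s) ≤ (1 - s) * h x + s * h y
namespace CatAux

/-- reversal of a geodesic segment -/
lemma seg_reverse {γ : ℝ → X} {x y : X} (h : IsGeodesicSegment γ x y) :
    IsGeodesicSegment (fun t => γ (1 - t)) y x := by
  obtain ⟨h0, h1, hd⟩ := h
  refine ⟨by simpa using h1, by simpa using h0, ?_⟩
  intro s hs t ht
  have h1s : (1:ℝ) - s ∈ Set.Icc (0:ℝ) 1 := ⟨by linarith [hs.2], by linarith [hs.1]⟩
  have h1t : (1:ℝ) - t ∈ Set.Icc (0:ℝ) 1 := ⟨by linarith [ht.2], by linarith [ht.1]⟩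
  rw [hd _ h1s _ h1t, dist_comm x y]
  congr 1
  rw [show (1:ℝ) - s - (1 - t) = -(s - t) by ring, abs_neg]

/-- affine subsegment of a geodesic segment -/
lemma seg_sub {γ : ℝ → X} {x y : X} (h : IsGeodesicSegment γ x y)
    {a b : ℝ} (ha : a ∈ Set.Icc (0:ℝ) 1) (hb : b ∈ Set.Icc (0:ℝ) 1) :
    IsGeodesicSegment (fun u => γ (a + u * (b - a))) (γ a) (γ b) := by
  obtain ⟨h0, h1, hd⟩ := h
  have hmem : ∀ u ∈ Set.Icc (0:ℝ) 1, a + u * (b - a) ∈ Set.Icc (0:ℝ) 1 := by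
    intro u hu
    rcases le_total a b with hab | hab
    · constructor
      · nlinarith [hu.1, hu.2, ha.1, ha.2, hb.1, hb.2]
      · nlinarith [hu.1, hu.2, ha.1, ha.2, hb.1, hb.2]
    · constructor
      · nlinarith [hu.1, hu.2, ha.1, ha.2, hb.1, hb.2]
      · nlinarith [hu.1, hu.2, ha.1, ha.2, hb.1, hb.2]
  refine ⟨by simp, by simp, ?_⟩
  intro s hs t ht
  rw [hd _ (hmem s hs) _ (hmem t ht), hd _ ha _ hb]
  rw [show a + s * (b - a) - (a + t * (b - a)) = (s - t) * (b - a) by ring]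
  rw [abs_mul, show |a - b| = |b - a| by rw [abs_sub_comm]]
  ring

/-- convexity of the distance to a point along geodesics (from CN) -/
lemma dist_convex (hX : CAT0Space X) {γ : ℝ → X} {x y : X}
    (h : IsGeodesicSegment γ x y) (z : X) {t : ℝ} (ht : t ∈ Set.Icc (0:ℝ) 1) :
    dist z (γ t) ≤ (1 - t) * dist z x + t * dist z y := by
  have hcn := hX.2 γ x y h z t ht
  have htri : |dist z x - dist z y| ≤ dist x y := by
    rw [dist_comm z x, dist_comm z y]; exact abs_dist_sub_le x y z
  have htri' : (dist z x - dist z y)^2 ≤ dist x y ^2 := by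
    have := sq_abs (dist z x - dist z y)
    nlinarith [abs_nonneg (dist z x - dist z y), dist_nonneg (x := x) (y := y)]
  have key : dist z (γ t) ^ 2 ≤ ((1 - t) * dist z x + t * dist z y)^2 := by
    nlinarith [ht.1, ht.2, mul_nonneg ht.1 (sub_nonneg.mpr ht.2)]
  have hrhs : 0 ≤ (1 - t) * dist z x + t * dist z y := by
    have := dist_nonneg (x := z) (y := x); have := dist_nonneg (x := z) (y := y)
    nlinarith [ht.1, ht.2]
  nlinarith [dist_nonneg (x := z) (y := γ t)]

/-- a geodesic segment between two points on a geodesic ray is on the ray -/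
lemma seg_on_ray (hX : CAT0Space X) {c : ℝ → X} (hc : IsGeodesicRay c)
    {γ : ℝ → X} {a b : ℝ} (ha : 0 ≤ a) (hb : 0 ≤ b)
    (h : IsGeodesicSegment γ (c a) (c b)) {t : ℝ} (ht : t ∈ Set.Icc (0:ℝ) 1) :
    γ t = c ((1 - t) * a + t * b) := by
  set w : ℝ := (1 - t) * a + t * b with hw
  have hw0 : 0 ≤ w := by nlinarith [ht.1, ht.2]
  have hcn := hX.2 γ (c a) (c b) h (c w) t ht
  have d1 : dist (c w) (c a) = |t * (b - a)| := by
    rw [hc w a hw0 ha, show w - a = t * (b - a) by ring]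
  have d2 : dist (c w) (c b) = |(1 - t) * (b - a)| := by
    rw [hc w b hw0 hb, show w - b = -((1 - t) * (b - a)) by ring, abs_neg]
  have d3 : dist (c a) (c b) = |b - a| := by rw [hc a b ha hb, abs_sub_comm]
  rw [d1, d2, d3] at hcn
  rw [abs_mul, abs_mul] at hcn
  have habs_t : |t| = t := abs_of_nonneg ht.1
  have habs_1t : |1 - t| = 1 - t := abs_of_nonneg (by linarith [ht.2])
  rw [habs_t, habs_1t] at hcn
  have : dist (c w) (γ t) ^ 2 ≤ 0 := by nlinarith [sq_abs (b - a)]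
  have : dist (c w) (γ t) = 0 := by
    nlinarith [dist_nonneg (x := c w) (y := γ t)]
  exact (dist_eq_zero.mp this).symm

end CatAux

namespace CatAux

/-- midpoint estimate for geodesics with a common endpoint -/
lemma mid_common_end (hX : CAT0Space X) {γ σ : ℝ → X} {x y p : X}
    (hγ : IsGeodesicSegment γ x y) (hσ : IsGeodesicSegment σ p y) :
    dist (γ (1/2 : ℝ)) (σ (1/2 : ℝ)) ≤ dist x p / 2 := by
  have hhalf : (1/2 : ℝ) ∈ Set.Icc (0:ℝ) 1 := by norm_num
  -- CN along σ with z = γ (1/2)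
  have h1 := hX.2 σ p y hσ (γ (1/2)) (1/2) hhalf
  -- CN along γ with z = p
  have h2 := hX.2 γ x y hγ p (1/2) hhalf
  -- distances from γ(1/2) to x and y
  have hy : dist (γ (1/2 : ℝ)) y = dist x y / 2 := by
    have h := hγ.2.2 (1/2) hhalf 1 (by norm_num)
    rw [hγ.2.1] at h
    rw [h, show |(1:ℝ)/2 - 1| = 1/2 by rw [abs_of_nonpos (by norm_num)]; norm_num]
    ring
  rw [hy] at h1
  have h0 : (0:ℝ) ≤ dist (γ (1/2:ℝ)) (σ (1/2:ℝ)) := dist_nonneg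
  have hd : dist (γ (1/2:ℝ)) (σ (1/2:ℝ)) ^ 2 ≤ (dist x p / 2)^2 := by
    rw [dist_comm (γ (1/2:ℝ)) p] at h1
    rw [dist_comm p x] at h2
    nlinarith [dist_nonneg (x := p) (y := γ (1/2:ℝ))]
  nlinarith [dist_nonneg (x := x) (y := p)]

/-- midpoint estimate for two arbitrary geodesics -/
lemma mid_general (hX : CAT0Space X) {γ σ : ℝ → X} {x y p q : X}
    (hγ : IsGeodesicSegment γ x y) (hσ : IsGeodesicSegment σ p q) :
    dist (γ (1/2 : ℝ)) (σ (1/2 : ℝ)) ≤ (dist x p + dist y q) / 2 := by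
  obtain ⟨τ, hτ⟩ := hX.1 x q
  -- pair (γ, τ): common start x; reverse both to get common end x
  have hγr := seg_reverse hγ
  have hτr := seg_reverse hτ
  have h1 : dist (γ (1/2:ℝ)) (τ (1/2:ℝ)) ≤ dist y q / 2 := by
    have h : dist (γ (1 - (1/2:ℝ))) (τ (1 - (1/2:ℝ))) ≤ dist y q / 2 :=
      mid_common_end hX hγr hτr
    rw [show (1:ℝ) - 1/2 = 1/2 by norm_num] at h
    exact h
  -- pair (τ, σ): common end q
  have h2 : dist (τ (1/2:ℝ)) (σ (1/2:ℝ)) ≤ dist x p / 2 := mid_common_end hX hτ hσ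
  calc dist (γ (1/2:ℝ)) (σ (1/2:ℝ))
      ≤ dist (γ (1/2:ℝ)) (τ (1/2:ℝ)) + dist (τ (1/2:ℝ)) (σ (1/2:ℝ)) := dist_triangle _ _ _
    _ ≤ (dist x p + dist y q) / 2 := by linarith

/-- dyadic convexity -/
lemma dyadic_conv (hX : CAT0Space X) :
    ∀ m : ℕ, ∀ k : ℕ, k ≤ 2^m →
    ∀ {γ σ : ℝ → X} {x y p q : X}, IsGeodesicSegment γ x y → IsGeodesicSegment σ p q →
      dist (γ ((k : ℝ)/2^m)) (σ ((k : ℝ)/2^m)) ≤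
        (1 - (k:ℝ)/2^m) * dist x p + ((k:ℝ)/2^m) * dist y q := by
  intro m
  induction m with
  | zero =>
    intro k hk γ σ x y p q hγ hσ
    interval_cases k
    · norm_num [hγ.1, hσ.1]
    · norm_num [hγ.2.1, hσ.2.1]
  | succ m ih =>
    intro k hk γ σ x y p q hγ hσ
    rcases Nat.even_or_odd k with ⟨j, hj⟩ | ⟨j, hj⟩
    · -- k = 2j
      have hj2 : j ≤ 2^m := by omega
      have hcast : ((k:ℝ))/2^(m+1) = (j:ℝ)/2^m := by
        subst hj; push_cast; ring
      rw [hcast]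
      exact ih j hj2 hγ hσ
    · -- k = 2j+1 : midpoint of j/2^m and (j+1)/2^m
      have hj1 : j + 1 ≤ 2^m := by omega
      have hj0 : j ≤ 2^m := by omega
      set a : ℝ := (j:ℝ)/2^m with hadef
      set b : ℝ := ((j:ℝ)+1)/2^m with hbdef
      have h2m : (0:ℝ) < 2^m := by positivity
      have haI : a ∈ Set.Icc (0:ℝ) 1 := by
        constructor
        · positivity
        · rw [hadef, div_le_one h2m]; exact_mod_cast hj0
      have hbI : b ∈ Set.Icc (0:ℝ) 1 := by
        constructor
        · positivity
        · rw [hbdef, div_le_one h2m]; exact_mod_cast hj1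
      have hγs := seg_sub hγ haI hbI
      have hσs := seg_sub hσ haI hbI
      have hmid : dist (γ (a + (1/2:ℝ)*(b-a))) (σ (a + (1/2:ℝ)*(b-a))) ≤
          (dist (γ a) (σ a) + dist (γ b) (σ b)) / 2 := mid_general hX hγs hσs
      rw [show a + (1/2:ℝ)*(b-a) = (a+b)/2 by ring] at hmid
      have ha' := ih j hj0 hγ hσ
      rw [← hadef] at ha'
      have hb' : dist (γ b) (σ b) ≤ (1 - b) * dist x p + b * dist y q := by
        have h := ih (j+1) hj1 hγ hσ
        rw [show (((j+1:ℕ)):ℝ) = (j:ℝ)+1 by push_cast; ring] at h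
        rw [← hbdef] at h
        exact h
      have hab : (1 : ℝ) - (k:ℝ)/2^(m+1) = 1 - (a+b)/2 := by
        subst hj; rw [hadef, hbdef]; push_cast; field_simp; ring
      have hab2 : ((k:ℝ))/2^(m+1) = (a+b)/2 := by
        subst hj; rw [hadef, hbdef]; push_cast; field_simp; ring
      rw [hab, hab2]
      calc dist (γ ((a+b)/2)) (σ ((a+b)/2))
          ≤ (dist (γ a) (σ a) + dist (γ b) (σ b)) / 2 := hmid
        _ ≤ (1 - (a+b)/2) * dist x p + ((a+b)/2) * dist y q := by linarith

/-- Convexity of the distance between two geodesics (CAT(0)). -/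
lemma geodesic_convexity (hX : CAT0Space X) {γ σ : ℝ → X} {x y p q : X}
    (hγ : IsGeodesicSegment γ x y) (hσ : IsGeodesicSegment σ p q)
    {t : ℝ} (ht : t ∈ Set.Icc (0:ℝ) 1) :
    dist (γ t) (σ t) ≤ (1 - t) * dist x p + t * dist y q := by
  refine le_of_forall_pos_le_add ?_
  intro ε hε
  set L : ℝ := dist x y + dist p q + dist x p + dist y q + 1 with hL
  have hL0 : (0:ℝ) < L := by
    have := dist_nonneg (x := x) (y := y); have := dist_nonneg (x := p) (y := q)
    have := dist_nonneg (x := x) (y := p); have := dist_nonneg (x := y) (y := q)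
    positivity
  -- choose dyadic t' close to t
  obtain ⟨m, hm⟩ : ∃ m : ℕ, ((1:ℝ)/2)^m < ε / L := by
    exact exists_pow_lt_of_lt_one (by positivity) (by norm_num)
  set k : ℕ := ⌊t * 2^m⌋₊ with hk
  have h2m : (0:ℝ) < 2^m := by positivity
  have hkle : k ≤ 2^m := by
    rw [hk]
    have : t * 2^m ≤ 2^m := by nlinarith [ht.2]
    calc ⌊t * 2^m⌋₊ ≤ ⌊(2:ℝ)^m⌋₊ := Nat.floor_le_floor this
      _ = 2^m := by
          rw [show ((2:ℝ)^m) = ((2^m : ℕ) : ℝ) by push_cast; ring, Nat.floor_natCast]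
  set t' : ℝ := (k:ℝ)/2^m with ht'
  have htt'1 : t' ≤ t := by
    rw [ht', div_le_iff₀ h2m]
    exact Nat.floor_le (by nlinarith [ht.1])
  have htt'2 : t - t' ≤ ((1:ℝ)/2)^m := by
    have h1 : t * 2^m < (k:ℝ) + 1 := Nat.lt_floor_add_one _
    have hk2 : t' * 2^m = (k:ℝ) := by rw [ht']; field_simp
    rw [div_pow, one_pow, le_div_iff₀ h2m]
    nlinarith
  have ht'I : t' ∈ Set.Icc (0:ℝ) 1 := by
    constructor
    · positivity
    · rw [ht', div_le_one h2m]; exact_mod_cast hkle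
  have hdy := dyadic_conv hX m k hkle hγ hσ
  rw [← ht'] at hdy
  have hdγ : dist (γ t) (γ t') ≤ (t - t') * dist x y := by
    rw [hγ.2.2 t ht t' ht'I, abs_of_nonneg (by linarith)]
  have hdσ : dist (σ t') (σ t) ≤ (t - t') * dist p q := by
    rw [hσ.2.2 t' ht'I t ht, abs_of_nonpos (by linarith), neg_sub]
  have hbound : dist (γ t) (σ t) ≤
      (1 - t) * dist x p + t * dist y q + (t - t') * L := by
    have tri : dist (γ t) (σ t) ≤ dist (γ t) (γ t') + dist (γ t') (σ t') + dist (σ t') (σ t) :=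
      dist_triangle4 _ _ _ _
    have hswap : (1 - t') * dist x p + t' * dist y q ≤
        (1 - t) * dist x p + t * dist y q + (t - t') * (dist x p + dist y q) := by
      have := dist_nonneg (x := x) (y := p); have := dist_nonneg (x := y) (y := q)
      nlinarith
    rw [hL]
    nlinarith [dist_nonneg (x := x) (y := y), dist_nonneg (x := p) (y := q)]
  have : (t - t') * L ≤ ε := by
    have h1 : t - t' ≤ ε / L := le_trans htt'2 (le_of_lt hm)
    calc (t - t') * L ≤ (ε/L) * L := by nlinarith
      _ = ε := by field_simp
  linarith

end CatAux

namespace CatAux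

section Proj

variable (hX : CAT0Space X) {c : ℝ → X} (hc : IsGeodesicRay c) {o : X} (hco : c 0 = o)
  {proj : X → X} (hproj : IsProjOnto proj (rayImage c))

lemma mem_rayImage {u : ℝ} (hu : 0 ≤ u) : c u ∈ rayImage c := ⟨u, hu, rfl⟩

include hco in
lemma o_mem_rayImage : o ∈ rayImage c := ⟨0, Set.self_mem_Ici, hco⟩

include hc hco hproj in
lemma proj_eq (x : X) : proj x = c (dist o (proj x)) := by
  obtain ⟨a, ha, hax⟩ := (hproj x).1
  have haa : dist o (proj x) = a := by
    rw [← hax, ← hco, hc 0 a le_rfl ha]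
    rw [show (0:ℝ) - a = -a by ring, abs_neg, abs_of_nonneg ha]
  rw [haa, hax]

/-- segment of a geodesic ray between two parameters -/
lemma ray_seg {ρ : ℝ → X} (hρ : IsGeodesicRay ρ) {a b : ℝ} (ha : 0 ≤ a) (hb : 0 ≤ b) :
    IsGeodesicSegment (fun v => ρ (a + v * (b - a))) (ρ a) (ρ b) := by
  have hmem : ∀ u : ℝ, u ∈ Set.Icc (0:ℝ) 1 → 0 ≤ a + u * (b - a) := by
    intro u hu
    rcases le_total a b with hab | hab
    · nlinarith [hu.1, hu.2]
    · nlinarith [hu.1, hu.2]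
  refine ⟨by simp, by simp, ?_⟩
  intro s hs t ht
  rw [hρ _ _ (hmem s hs) (hmem t ht), hρ a b ha hb]
  rw [show a + s * (b - a) - (a + t * (b - a)) = (s - t) * (b - a) by ring]
  rw [abs_mul, show |a - b| = |b - a| by rw [abs_sub_comm]]

include hX hc hco hproj in
/-- Pythagorean inequality for the nearest-point projection. -/
lemma proj_pyth (x : X) {u : ℝ} (hu : 0 ≤ u) :
    dist x (proj x) ^ 2 + (dist o (proj x) - u) ^ 2 ≤ dist x (c u) ^ 2 := by
  set a : ℝ := dist o (proj x) with hadef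
  have ha : 0 ≤ a := dist_nonneg
  have hpx : proj x = c a := proj_eq hc hco hproj x
  obtain ⟨γ, hγ⟩ := hX.1 (c a) (c u)
  have key : ∀ t ∈ Set.Icc (0:ℝ) 1,
      dist x (c a) ^ 2 ≤ (1-t) * dist x (c a) ^ 2 + t * dist x (c u) ^ 2
        - t * (1-t) * dist (c a) (c u) ^ 2 := by
    intro t ht
    have hcn := hX.2 γ (c a) (c u) hγ x t ht
    have hmem : γ t = c ((1-t)*a + t*u) := seg_on_ray hX hc ha hu hγ ht
    have hnear : dist x (c a) ≤ dist x (γ t) := by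
      rw [hmem, ← hpx]
      exact (hproj x).2 _ (mem_rayImage (by nlinarith [ht.1, ht.2]))
    nlinarith [dist_nonneg (x := x) (y := γ t), dist_nonneg (x := x) (y := c a)]
  have main : dist x (c a) ^ 2 + dist (c a) (c u) ^ 2 ≤ dist x (c u) ^ 2 := by
    refine le_of_forall_pos_le_add ?_
    intro ε hε
    set D2 : ℝ := dist (c a) (c u) ^ 2 with hD2def
    have hD2 : 0 ≤ D2 := sq_nonneg _
    set t : ℝ := min 1 (ε / (D2+1)) with htdef
    have ht0 : 0 < t := lt_min one_pos (by positivity)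
    have ht1 : t ≤ 1 := min_le_left _ _
    have hk := key t ⟨le_of_lt ht0, ht1⟩
    have htD : t * D2 ≤ ε := by
      have h1 : t ≤ ε/(D2+1) := min_le_right _ _
      have h2 : (ε/(D2+1)) * D2 ≤ ε := by
        rw [div_mul_eq_mul_div, div_le_iff₀ (by positivity)]
        nlinarith
      nlinarith
    have step : dist x (c a) ^ 2 + (1-t) * D2 ≤ dist x (c u) ^ 2 := by
      have h' : t * (dist x (c a) ^ 2 + (1-t) * D2) ≤ t * dist x (c u) ^ 2 := by
        nlinarith [hk]
      exact le_of_mul_le_mul_left h' ht0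
    linarith
  have hxa : dist x (c a) = dist x (proj x) := by rw [hpx]
  have hau : dist (c a) (c u) = |a - u| := hc a u ha hu
  rw [hxa, hau] at main
  calc dist x (proj x) ^ 2 + (a - u)^2 = dist x (proj x) ^2 + |a-u|^2 := by
        rw [sq_abs]
    _ ≤ dist x (c u) ^ 2 := main

include hX hc hco hproj in
lemma dist_param_le (x : X) {u : ℝ} (hu : 0 ≤ u) :
    |u - dist o (proj x)| ≤ dist x (c u) := by
  have h := proj_pyth hX hc hco hproj x hu
  have h2 : (u - dist o (proj x))^2 ≤ dist x (c u) ^2 := by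
    nlinarith [sq_nonneg (dist x (proj x))]
  calc |u - dist o (proj x)| = Real.sqrt ((u - dist o (proj x))^2) :=
        (Real.sqrt_sq_eq_abs _).symm
    _ ≤ Real.sqrt (dist x (c u)^2) := Real.sqrt_le_sqrt h2
    _ = dist x (c u) := Real.sqrt_sq dist_nonneg

end Proj

end CatAux

namespace CatAux

set_option linter.unusedSectionVars false

section GRB

variable (hX : CAT0Space X) {c : ℝ → X} (hc : IsGeodesicRay c) {o : X} (hco : c 0 = o)
  {proj : X → X} (hproj : IsProjOnto proj (rayImage c)) (hbgi : BGIP c proj)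

include hX hc hco hproj hbgi in
/-- Master lemma: a ray from `o` not asymptotic to `c` satisfies a Gromov-product-type
lower bound on distances to points of `c`. -/
lemma grb {ρ : ℝ → X} (hρ : IsGeodesicRay ρ) (hρo : ρ 0 = o)
    (hnas : ¬ Asymptotic c ρ) :
    ∃ K : ℝ, 0 ≤ K ∧ ∀ t u : ℝ, 0 ≤ t → 0 ≤ u → t + u - K ≤ dist (ρ t) (c u) := by
  classical
  obtain ⟨n, hn0, hball⟩ := hbgi ρ hρ (by rw [hρo, hco])
  set F : ℝ → ℝ := fun t => dist (ρ t) (proj (ρ t)) with hFdef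
  set G : ℝ → ℝ := fun t => dist o (proj (ρ t)) with hGdef
  have hF0 : ∀ t : ℝ, 0 ≤ F t := fun t => dist_nonneg
  have hG0 : ∀ t : ℝ, 0 ≤ G t := fun t => dist_nonneg
  have hdo : ∀ t : ℝ, 0 ≤ t → dist (ρ t) o = t := by
    intro t ht
    rw [← hρo, hρ t 0 ht le_rfl]
    rw [show t - 0 = t by ring, abs_of_nonneg ht]
  -- F t ≤ t
  have hFt : ∀ t : ℝ, 0 ≤ t → F t ≤ t := by
    intro t ht
    have h := (hproj (ρ t)).2 o (o_mem_rayImage hco)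
    rw [hdo t ht] at h; exact h
  -- G t ≤ 2 t
  have hGt : ∀ t : ℝ, 0 ≤ t → G t ≤ 2 * t := by
    intro t ht
    have : G t ≤ dist o (ρ t) + F t := by
      have := dist_triangle o (ρ t) (proj (ρ t)); simpa [hFdef, hGdef] using this
    have h2 : dist o (ρ t) = t := by rw [dist_comm]; exact hdo t ht
    rw [h2] at this; linarith [hFt t ht]
  -- |t - G t| ≤ F t
  have hFG : ∀ t : ℝ, 0 ≤ t → |t - G t| ≤ F t := by
    intro t ht
    have h := abs_dist_sub_le (ρ t) (proj (ρ t)) o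
    rw [hdo t ht, dist_comm (proj (ρ t)) o] at h
    simpa [hFdef, hGdef] using h
  -- monotonicity of F
  have hFmono : ∀ s t : ℝ, 0 ≤ s → s ≤ t → F s ≤ F t := by
    intro s t hs hst
    rcases eq_or_lt_of_le (hs.trans hst) with h0 | h0
    · have : s = 0 := le_antisymm (hst.trans h0.symm.le) hs
      rw [this, ← h0]
    · have ht : 0 ≤ t := hs.trans hst
      set v : ℝ := s / t with hvdef
      have hv : v ∈ Set.Icc (0:ℝ) 1 := ⟨by positivity, by rw [hvdef, div_le_one h0]; exact hst⟩
      have hrs := ray_seg hρ (le_refl (0:ℝ)) ht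
      obtain ⟨σ, hσ⟩ := hX.1 (proj (ρ 0)) (proj (ρ t))
      have hσmem : ∀ w ∈ Set.Icc (0:ℝ) 1, σ w ∈ rayImage c := by
        intro w hw
        have e0 : proj (ρ 0) = c (dist o (proj (ρ 0))) := proj_eq hc hco hproj _
        have e1 : proj (ρ t) = c (dist o (proj (ρ t))) := proj_eq hc hco hproj _
        rw [e0, e1] at hσ
        rw [seg_on_ray hX hc dist_nonneg dist_nonneg hσ hw]
        have hp1 : (0:ℝ) ≤ (1 - w) * dist o (proj (ρ 0)) :=
          mul_nonneg (by linarith [hw.2]) dist_nonneg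
        have hp2 : (0:ℝ) ≤ w * dist o (proj (ρ t)) := mul_nonneg hw.1 dist_nonneg
        exact mem_rayImage (by linarith)
      have hconv := geodesic_convexity hX hrs hσ hv
      have hF00 : F 0 = 0 := by
        have h := (hproj (ρ 0)).2 (ρ 0) (by rw [hρo]; exact o_mem_rayImage hco)
        simp only [hFdef]
        have := dist_nonneg (x := ρ 0) (y := proj (ρ 0))
        simpa using le_antisymm (by simpa using h) this
      have heval : (0:ℝ) + v * (t - 0) = s := by
          rw [hvdef, zero_add, sub_zero, div_mul_cancel₀ _ (ne_of_gt h0)]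
      have hFs : F s ≤ dist (ρ s) (σ v) := by
        exact (hproj (ρ s)).2 _ (hσmem v hv)
      rw [heval] at hconv
      have : F s ≤ (1 - v) * F 0 + v * F t := le_trans hFs hconv
      rw [hF00] at this
      have hv1 : v ≤ 1 := hv.2
      have hp : v * F t ≤ F t := by nlinarith [hF0 t]
      linarith
  -- F is unbounded
  have hFunb : ∃ t₁ : ℝ, 0 ≤ t₁ ∧ 2*n + 2 ≤ F t₁ := by
    by_contra hcon
    push_neg at hcon
    apply hnas
    refine ⟨2*(2*n+2), ?_⟩
    intro t ht
    have h1 : dist (c t) (ρ t) ≤ dist (c t) (c (G t)) + dist (c (G t)) (ρ t) :=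
      dist_triangle _ _ _
    have h2 : c (G t) = proj (ρ t) := (proj_eq hc hco hproj (ρ t)).symm
    have h3 : dist (c t) (c (G t)) = |t - G t| := hc t (G t) ht (hG0 t)
    have h4 : dist (c (G t)) (ρ t) = F t := by rw [h2, dist_comm]
    have h5 := hFG t ht
    have h6 := le_of_lt (hcon t ht)
    rw [h3, h4] at h1
    linarith
  obtain ⟨t₁, ht₁0, ht₁F⟩ := hFunb
  -- down-step
  have hdown : ∀ t : ℝ, t₁ ≤ t →
      dist (proj (ρ t)) (proj (ρ (t - F t + 1))) ≤ n := by
    intro t ht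
    have ht0 : (0:ℝ) ≤ t := ht₁0.trans ht
    have hFbig : 2*n + 2 ≤ F t := le_trans ht₁F (hFmono t₁ t ht₁0 ht)
    set r : ℝ := F t - 1 with hrdef
    have hr0 : 0 ≤ r := by simp only [hrdef]; linarith
    have hdisj : Metric.closedBall (ρ t) r ∩ rayImage c = ∅ := by
      rw [Set.eq_empty_iff_forall_notMem]
      rintro w ⟨hw1, hw2⟩
      have hnear : F t ≤ dist (ρ t) w := (hproj (ρ t)).2 w hw2
      have : dist w (ρ t) ≤ r := Metric.mem_closedBall.mp hw1
      rw [dist_comm] at this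
      simp only [hrdef] at this
      linarith
    have hdiam := hball t r ht0 hdisj
    have hsub : proj '' Metric.closedBall (ρ t) r ⊆ Metric.closedBall o (2*(t+r)) := by
      rintro y ⟨w, hw, rfl⟩
      have hw' : dist w (ρ t) ≤ r := Metric.mem_closedBall.mp hw
      have h1 : dist (proj w) o ≤ dist (proj w) w + dist w o := dist_triangle _ _ _
      have h2 : dist w (proj w) ≤ dist w o := (hproj w).2 o (o_mem_rayImage hco)
      have h3 : dist w o ≤ dist w (ρ t) + dist (ρ t) o := dist_triangle _ _ _
      rw [hdo t ht0] at h3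
      rw [Metric.mem_closedBall]
      rw [dist_comm (proj w) w] at h1
      linarith
    have hbdd : Bornology.IsBounded (proj '' Metric.closedBall (ρ t) r) :=
      (Metric.isBounded_closedBall (x := o) (r := 2*(t+r))).subset hsub
    have hm1 : ρ t ∈ Metric.closedBall (ρ t) r := by
      rw [Metric.mem_closedBall, dist_self]; exact hr0
    have hm2 : ρ (t - F t + 1) ∈ Metric.closedBall (ρ t) r := by
      rw [Metric.mem_closedBall]
      have h0' : 0 ≤ t - F t + 1 := by have := hFt t ht0; linarith
      rw [hρ _ _ h0' ht0]
      rw [show t - F t + 1 - t = -(F t - 1) by ring, abs_neg, abs_of_nonneg (by linarith)]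
      try simp [hrdef]
    calc dist (proj (ρ t)) (proj (ρ (t - F t + 1)))
        ≤ Metric.diam (proj '' Metric.closedBall (ρ t) r) :=
          Metric.dist_le_diam_of_mem hbdd ⟨_, hm1, rfl⟩ ⟨_, hm2, rfl⟩
      _ ≤ n := hdiam
  -- descent induction
  have hLEM1 : ∀ k : ℕ, ∀ s : ℝ, 0 ≤ s → s ≤ t₁ + k*(2*n+1) → G s ≤ 2*t₁ + n*(k+1) := by
    intro k
    induction k with
    | zero =>
      intro s hs hsle
      push_cast at hsle
      have := hGt s hs
      nlinarith
    | succ k ih =>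
      intro s hs hsle
      by_cases hcase : s ≤ t₁
      · have := hGt s hs
        have hk : (0:ℝ) ≤ (k:ℝ) + 1 := by positivity
        nlinarith
      · push_neg at hcase
        set s' : ℝ := s - F s + 1 with hs'def
        have hFbig : 2*n + 2 ≤ F s := le_trans ht₁F (hFmono t₁ s ht₁0 hcase.le)
        have hs'0 : 0 ≤ s' := by
          have := hFt s hs; simp only [hs'def]; linarith
        have hs'le : s' ≤ t₁ + k*(2*n+1) := by
          push_cast at hsle ⊢
          simp only [hs'def]
          nlinarith
        have hstep := hdown s hcase.le
        have habs : |G s - G s'| ≤ n := by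
          have h := abs_dist_sub_le (proj (ρ s)) (proj (ρ s')) o
          rw [dist_comm (proj (ρ s)) o, dist_comm (proj (ρ s')) o] at h
          exact le_trans (by simpa [hGdef] using h) hstep
        have := ih s' hs'0 hs'le
        have h1 : G s - G s' ≤ n := (abs_le.mp habs).2
        push_cast
        push_cast at this
        linarith
  -- linear-half bound
  have hGhalf : ∀ s : ℝ, 0 ≤ s → G s ≤ (2*t₁ + 2*n) + s/2 := by
    intro s hs
    set k : ℕ := ⌈s/(2*n+1)⌉₊ with hkdef
    have h2n : (0:ℝ) < 2*n+1 := by linarith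
    have hsk : s ≤ t₁ + k*(2*n+1) := by
      have h1 : s/(2*n+1) ≤ (k:ℝ) := Nat.le_ceil _
      have h2 : s ≤ (k:ℝ)*(2*n+1) := by
        rw [div_le_iff₀ h2n] at h1; linarith
      linarith
    have h3 := hLEM1 k s hs hsk
    have h4 : (k:ℝ) < s/(2*n+1) + 1 := Nat.ceil_lt_add_one (by positivity)
    have h5 : n * (s/(2*n+1)) ≤ s/2 := by
      rw [← mul_div_assoc, div_le_div_iff₀ h2n (by norm_num : (0:ℝ) < 2)]
      nlinarith
    have h6 : n*(k:ℝ) ≤ n * (s/(2*n+1)) + n := by nlinarith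
    linarith
  -- shortcut
  have hshort : ∀ t : ℝ, t₁ ≤ t → t - F t ≤ t₁ + F t₁ + G t + G t₁ := by
    intro t ht
    have ht0 : (0:ℝ) ≤ t := ht₁0.trans ht
    have h1 : dist (ρ t) (ρ t₁) = t - t₁ := by
      rw [hρ t t₁ ht0 ht₁0, abs_of_nonneg (by linarith)]
    have h2 : dist (ρ t) (ρ t₁) ≤ F t + dist (proj (ρ t)) (proj (ρ t₁)) + F t₁ := by
      calc dist (ρ t) (ρ t₁) ≤ dist (ρ t) (proj (ρ t)) + dist (proj (ρ t)) (ρ t₁) :=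
            dist_triangle _ _ _
        _ ≤ dist (ρ t) (proj (ρ t)) + (dist (proj (ρ t)) (proj (ρ t₁)) + dist (proj (ρ t₁)) (ρ t₁)) := by
            linarith [dist_triangle (proj (ρ t)) (proj (ρ t₁)) (ρ t₁)]
        _ = F t + dist (proj (ρ t)) (proj (ρ t₁)) + F t₁ := by
            rw [dist_comm (proj (ρ t₁)) (ρ t₁)]; simp [hFdef]; ring
    have h3 : dist (proj (ρ t)) (proj (ρ t₁)) ≤ G t + G t₁ := by
      calc dist (proj (ρ t)) (proj (ρ t₁)) ≤
          dist (proj (ρ t)) o + dist o (proj (ρ t₁)) := dist_triangle _ _ _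
        _ = G t + G t₁ := by rw [dist_comm (proj (ρ t)) o]
    rw [h1] at h2
    linarith
  -- uniform bound on G
  set GB : ℝ := 8*t₁ + 6*n + 1 with hGBdef
  have hGB : ∀ t : ℝ, 0 ≤ t → G t ≤ GB := by
    intro t ht
    by_cases hcase : t ≤ t₁
    · have := hGt t ht; simp only [hGBdef]; nlinarith
    · push_neg at hcase
      have hFbig : 2*n + 2 ≤ F t := le_trans ht₁F (hFmono t₁ t ht₁0 hcase.le)
      have hs'0 : 0 ≤ t - F t + 1 := by have := hFt t ht; linarith
      have h1 : G t ≤ G (t - F t + 1) + n := by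
        have hstep := hdown t hcase.le
        have h := abs_dist_sub_le (proj (ρ t)) (proj (ρ (t - F t + 1))) o
        rw [dist_comm (proj (ρ t)) o, dist_comm (proj (ρ (t - F t + 1))) o] at h
        have := le_trans (by simpa [hGdef] using h) hstep
        have h2 := (abs_le.mp this).2
        linarith
      have h2 : G (t - F t + 1) ≤ (2*t₁ + 2*n) + (t - F t + 1)/2 := hGhalf _ hs'0
      have h3 := hshort t hcase.le
      have h4 : G t₁ ≤ 2*t₁ := hGt t₁ ht₁0
      have h5 : F t₁ ≤ t₁ := hFt t₁ ht₁0
      simp only [hGBdef]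
      linarith
  -- lower bound for F
  set Δ : ℝ := 2*t₁ + 2*GB with hΔdef
  have hFlow : ∀ t : ℝ, t₁ ≤ t → t - Δ ≤ F t := by
    intro t ht
    have h1 := hshort t ht
    have h2 := hGB t (ht₁0.trans ht)
    have h3 := hGB t₁ ht₁0
    have h4 : F t₁ ≤ t₁ := hFt t₁ ht₁0
    simp only [hΔdef]
    linarith
  -- the contraction estimate (I8)
  have hI8 : ∀ t u : ℝ, t₁ ≤ t → 0 ≤ u → F t + u - G t - n - 1 ≤ dist (ρ t) (c u) := by
    intro t u ht hu
    have ht0 : (0:ℝ) ≤ t := ht₁0.trans ht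
    have hFbig : 2*n + 2 ≤ F t := le_trans ht₁F (hFmono t₁ t ht₁0 ht)
    have hnear : F t ≤ dist (ρ t) (c u) := (hproj (ρ t)).2 _ (mem_rayImage hu)
    by_cases hcase : u ≤ G t + n
    · linarith
    · push_neg at hcase
      obtain ⟨γ, hγ⟩ := hX.1 (ρ t) (c u)
      set L : ℝ := dist (ρ t) (c u) with hLdef
      have hL1 : F t ≤ L := hnear
      have hL0 : (0:ℝ) < L := by linarith
      set θ : ℝ := (F t - 1)/L with hθdef
      have hθI : θ ∈ Set.Icc (0:ℝ) 1 := by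
        constructor
        · apply div_nonneg (by linarith) hL0.le
        · rw [hθdef, div_le_one hL0]; linarith
      set y : X := γ θ with hydef
      have hd1 : dist (ρ t) y = F t - 1 := by
        have h := hγ.2.2 0 (by norm_num) θ hθI
        rw [hγ.1] at h
        rw [hydef, h]
        rw [show (0:ℝ) - θ = -θ by ring, abs_neg, abs_of_nonneg hθI.1]
        rw [hθdef, ← hLdef]
        field_simp
      have hd2 : dist y (c u) = L - (F t - 1) := by
        have h := hγ.2.2 θ hθI 1 (by norm_num)
        rw [hγ.2.1] at h
        rw [hydef, h]
        rw [abs_of_nonpos (by linarith [hθI.2]), ← hLdef]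
        rw [hθdef]
        field_simp
        try ring
      have hymem : y ∈ Metric.closedBall (ρ t) (F t - 1) := by
        rw [Metric.mem_closedBall, dist_comm]
        rw [hd1]
      have hdisj : Metric.closedBall (ρ t) (F t - 1) ∩ rayImage c = ∅ := by
        rw [Set.eq_empty_iff_forall_notMem]
        rintro w ⟨hw1, hw2⟩
        have hnear' : F t ≤ dist (ρ t) w := (hproj (ρ t)).2 w hw2
        have : dist w (ρ t) ≤ F t - 1 := Metric.mem_closedBall.mp hw1
        rw [dist_comm] at this
        linarith
      have hdiam := hball t (F t - 1) ht0 hdisj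
      have hsub : proj '' Metric.closedBall (ρ t) (F t - 1) ⊆
          Metric.closedBall o (2*(t+(F t - 1))) := by
        rintro w' ⟨w, hw, rfl⟩
        have hw' : dist w (ρ t) ≤ F t - 1 := Metric.mem_closedBall.mp hw
        have h1 : dist (proj w) o ≤ dist (proj w) w + dist w o := dist_triangle _ _ _
        have h2 : dist w (proj w) ≤ dist w o := (hproj w).2 o (o_mem_rayImage hco)
        have h3 : dist w o ≤ dist w (ρ t) + dist (ρ t) o := dist_triangle _ _ _
        rw [hdo t ht0] at h3
        rw [Metric.mem_closedBall]
        rw [dist_comm (proj w) w] at h1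
        linarith
      have hbdd : Bornology.IsBounded (proj '' Metric.closedBall (ρ t) (F t - 1)) :=
        (Metric.isBounded_closedBall (x := o) (r := 2*(t+(F t - 1)))).subset hsub
      have hm1 : ρ t ∈ Metric.closedBall (ρ t) (F t - 1) := by
        rw [Metric.mem_closedBall, dist_self]; linarith
      have hpp : dist (proj y) (proj (ρ t)) ≤ n := by
        calc dist (proj y) (proj (ρ t))
            ≤ Metric.diam (proj '' Metric.closedBall (ρ t) (F t - 1)) :=
              Metric.dist_le_diam_of_mem hbdd ⟨_, hymem, rfl⟩ ⟨_, hm1, rfl⟩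
          _ ≤ n := hdiam
      have hGy : |dist o (proj y) - G t| ≤ n := by
        have h := abs_dist_sub_le (proj y) (proj (ρ t)) o
        rw [dist_comm (proj y) o, dist_comm (proj (ρ t)) o] at h
        exact le_trans (by simpa [hGdef] using h) hpp
      have hyd : u - G t - n ≤ dist y (c u) := by
        have h := dist_param_le hX hc hco hproj y hu
        have h1 : u - dist o (proj y) ≤ |u - dist o (proj y)| := le_abs_self _
        have h2 : dist o (proj y) ≤ G t + n := by linarith [(abs_le.mp hGy).2]
        linarith
      have hLeq : L = (F t - 1) + dist y (c u) := by rw [hd2]; ring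
      rw [hLeq]
      linarith
  -- conclusion
  refine ⟨Δ + GB + n + 1 + 2*t₁, by positivity, ?_⟩
  intro t u ht hu
  by_cases hcase : t₁ ≤ t
  · have h1 := hI8 t u hcase hu
    have h2 := hFlow t hcase
    have h3 := hGB t ht
    linarith
  · push_neg at hcase
    have h1 : dist o (c u) ≤ dist o (ρ t) + dist (ρ t) (c u) := dist_triangle _ _ _
    have h2 : dist o (c u) = u := by
      rw [← hco, hc 0 u le_rfl hu]
      rw [show (0:ℝ) - u = -u by ring, abs_neg, abs_of_nonneg hu]
    have h3 : dist o (ρ t) = t := by rw [dist_comm]; exact hdo t ht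
    rw [h2, h3] at h1
    have hG0' := hGB t ht
    have : 0 ≤ GB := le_trans (hG0 t) hG0'
    linarith

end GRB

end CatAux

namespace CatAux

section Bus

variable {c : ℝ → X} (hc : IsGeodesicRay c)

lemma bus_def (x : X) : busemann c x = ⨅ t : Set.Ici (0:ℝ), (dist x (c (t:ℝ)) - (t:ℝ)) := rfl

include hc in
lemma bus_bddBelow (x : X) :
    BddBelow (Set.range (fun t : Set.Ici (0:ℝ) => dist x (c (t:ℝ)) - (t:ℝ))) := by
  refine ⟨-dist x (c 0), ?_⟩
  rintro y ⟨⟨t, ht⟩, rfl⟩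
  simp only
  have h1 : dist (c 0) (c t) = t := by
    rw [hc 0 t le_rfl ht, show (0:ℝ) - t = -t by ring, abs_neg, abs_of_nonneg ht]
  have h2 : dist (c 0) (c t) ≤ dist (c 0) x + dist x (c t) := dist_triangle _ _ _
  rw [h1, dist_comm (c 0) x] at h2
  linarith

include hc in
lemma bus_le (x : X) {u : ℝ} (hu : 0 ≤ u) : busemann c x ≤ dist x (c u) - u := by
  rw [bus_def]
  exact ciInf_le (bus_bddBelow hc x) ⟨u, hu⟩

lemma bus_ge (x : X) {A : ℝ} (h : ∀ u : ℝ, 0 ≤ u → A ≤ dist x (c u) - u) :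
    A ≤ busemann c x := by
  rw [bus_def]
  exact le_ciInf (fun ⟨u, hu⟩ => h u hu)

include hc in
lemma bus_lip (x y : X) : busemann c x ≤ busemann c y + dist x y := by
  have h : busemann c x - dist x y ≤ busemann c y := by
    apply bus_ge
    intro u hu
    have h1 : busemann c x ≤ dist x (c u) - u := bus_le hc x hu
    have h2 : dist x (c u) ≤ dist x y + dist y (c u) := dist_triangle _ _ _
    linarith
  linarith

include hc in
lemma bus_lip_abs (x y : X) : |busemann c x - busemann c y| ≤ dist x y := by
  rw [abs_le]
  constructor
  · have := bus_lip hc y x; rw [dist_comm y x] at this; linarith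
  · have := bus_lip hc x y; linarith

include hc in
lemma bus_self {u : ℝ} (hu : 0 ≤ u) : busemann c (c u) = -u := by
  apply le_antisymm
  · have := bus_le hc (c u) hu
    simpa using this
  · apply bus_ge
    intro v hv
    have h1 : dist (c u) (c v) = |u - v| := hc u v hu hv
    have h2 : v - u ≤ |u - v| := by
      rw [abs_sub_comm]; exact le_abs_self _
    linarith

include hc in
lemma bus_approx (x : X) {ε : ℝ} (hε : 0 < ε) :
    ∃ U : ℝ, 0 ≤ U ∧ ∀ u : ℝ, U ≤ u → dist x (c u) - u ≤ busemann c x + ε := by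
  have h : busemann c x < busemann c x + ε := lt_add_of_pos_right _ hε
  rw [bus_def] at h
  obtain ⟨⟨V, hV⟩, hlt⟩ := exists_lt_of_ciInf_lt h
  refine ⟨V, hV, ?_⟩
  intro u hu
  have hu0 : (0:ℝ) ≤ u := hV.trans hu
  have h2 : dist x (c u) ≤ dist x (c V) + dist (c V) (c u) := dist_triangle _ _ _
  have h3 : dist (c V) (c u) = u - V := by
    rw [hc V u hV hu0, abs_of_nonpos (by linarith), neg_sub]
  have h4 : dist x (c V) - (V:ℝ) ≤ busemann c x + ε := le_of_lt hlt
  rw [bus_def]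
  linarith

include hc in
lemma bus_convex (hX : CAT0Space X) {γ : ℝ → X} {x y : X}
    (hγ : IsGeodesicSegment γ x y) {s : ℝ} (hs : s ∈ Set.Icc (0:ℝ) 1) :
    busemann c (γ s) ≤ (1 - s) * busemann c x + s * busemann c y := by
  refine le_of_forall_pos_le_add ?_
  intro ε hε
  obtain ⟨U₁, hU₁0, hU₁⟩ := bus_approx hc x hε
  obtain ⟨U₂, hU₂0, hU₂⟩ := bus_approx hc y hε
  set u : ℝ := max U₁ U₂ with hudef
  have hu0 : 0 ≤ u := le_trans hU₁0 (le_max_left _ _)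
  have h1 := bus_le hc (γ s) hu0
  have h2 := dist_convex hX hγ (c u) hs
  rw [dist_comm (c u) x, dist_comm (c u) y, dist_comm (c u) (γ s)] at h2
  have h3 := hU₁ u (le_max_left _ _)
  have h4 := hU₂ u (le_max_right _ _)
  have hs1 : 0 ≤ 1 - s := by linarith [hs.2]
  have e1 : (1-s) * (dist x (c u) - u) ≤ (1-s) * (busemann c x + ε) :=
    mul_le_mul_of_nonneg_left h3 hs1
  have e2 : s * (dist y (c u) - u) ≤ s * (busemann c y + ε) :=
    mul_le_mul_of_nonneg_left h4 hs.1
  nlinarith [h1, h2]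

end Bus

end CatAux

namespace CatAux

open Topology

section Lim

lemma exists_ulim [ProperSpace X] (U : Ultrafilter ℕ) {ψ : ℕ → X} {z : X} {R : ℝ}
    (h : ∀ᶠ k in (U : Filter ℕ), ψ k ∈ Metric.closedBall z R) :
    ∃ x : X, Tendsto ψ (U : Filter ℕ) (𝓝 x) := by
  have hmem : Metric.closedBall z R ∈ Filter.map ψ (U : Filter ℕ) := by
    rw [Filter.mem_map]
    exact h
  obtain ⟨x, _, hx2⟩ := (isCompact_closedBall z R).ultrafilter_le_nhds (U.map ψ)
    (by rw [Ultrafilter.coe_map, le_principal_iff]; exact hmem)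
  refine ⟨x, ?_⟩
  rwa [Ultrafilter.coe_map] at hx2

lemma ray_from_o_seg {r : ℝ → X} {o : X} (hr : IsGeodesicRay r) (hro : r 0 = o)
    {T : ℝ} (hT : 0 ≤ T) :
    IsGeodesicSegment (fun v => r (v * T)) o (r T) := by
  refine ⟨by show r (0*T) = o; rw [zero_mul, hro], by show r (1*T) = r T; rw [one_mul], ?_⟩
  intro s hs t ht
  have h1 : dist (r (s*T)) (r (t*T)) = |s*T - t*T| :=
    hr _ _ (mul_nonneg hs.1 hT) (mul_nonneg ht.1 hT)
  have h2 : dist o (r T) = T := by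
    rw [← hro, hr 0 T le_rfl hT, show (0:ℝ) - T = -T by ring, abs_neg, abs_of_nonneg hT]
  rw [h1, h2, show s*T - t*T = (s-t)*T by ring, abs_mul, abs_of_nonneg hT]

end Lim

end CatAux


open CatAux Topology in
set_option maxHeartbeats 1000000 in
/-- visibility. A boundary point defined by a ray with the bounded
geodesic image property is joined to any other boundary point by a geodesic line. -/
theorem bgip_ray_is_visibility_point
    {X : Type*} [MetricSpace X] [ProperSpace X] [CompleteSpace X]
    (hX : CAT0Space X) (o : X)
    (c : ℝ → X) (hc : IsGeodesicRay c) (hco : c 0 = o)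
    (proj : X → X) (hproj : IsProjOnto proj (rayImage c))
    (hbgi : BGIP c proj)
    (c' : ℝ → X) (hc' : IsGeodesicRay c') (hc'o : c' 0 = o)
    (hne : ¬ Asymptotic c c') :
    ∃ l : ℝ → X,
      (∀ s t : ℝ, dist (l s) (l t) = |s - t|) ∧
      Asymptotic (fun t => l (-t)) c ∧
      Asymptotic l c' := by
  classical
  obtain ⟨K, hK0, hKgrb⟩ := grb hX hc hco hproj hbgi hc' hc'o hne
  have hbusc' : ∀ t : ℝ, 0 ≤ t → t - K ≤ busemann c (c' t) := by
    intro t ht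
    apply bus_ge
    intro u hu
    have := hKgrb t u ht hu
    linarith
  have hbusc : ∀ u : ℝ, 0 ≤ u → u - K ≤ busemann c' (c u) := by
    intro u hu
    apply bus_ge
    intro v hv
    have h := hKgrb v u hv hu
    rw [dist_comm (c' v) (c u)] at h
    linarith
  have hbco : busemann c o = 0 := by
    rw [← hco]
    rw [bus_self hc le_rfl]
    norm_num
  have hbc'o : busemann c' o = 0 := by
    rw [← hc'o, bus_self hc' le_rfl]
    norm_num
  set T2 : ℝ := K + 1 with hT2def
  -- anchors
  have hanchor : ∀ k : ℕ, ∃ (γ : ℝ → X) (s : ℝ),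
      IsGeodesicSegment γ (c' (T2 + k)) (c (T2 + k)) ∧ s ∈ Set.Icc (0:ℝ) 1 ∧
      busemann c (γ s) = 0 ∧ busemann c' (γ s) ≤ 0 := by
    intro k
    set T : ℝ := T2 + k with hTdef
    have hT0 : (0:ℝ) ≤ T := by simp only [hTdef, hT2def]; positivity
    have hT1 : K + 1 ≤ T := by
      simp only [hTdef, hT2def]
      have : (0:ℝ) ≤ (k:ℝ) := Nat.cast_nonneg k
      linarith
    obtain ⟨γ, hγ⟩ := hX.1 (c' T) (c T)
    set L : ℝ := dist (c' T) (c T) with hLdef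
    have hL0 : 0 ≤ L := dist_nonneg
    have hcont : ContinuousOn (fun s => busemann c (γ s)) (Set.Icc 0 1) := by
      rw [Metric.continuousOn_iff]
      intro s hs ε hε
      refine ⟨ε/(L+1), by positivity, ?_⟩
      intro t ht hd
      have h1 : |busemann c (γ t) - busemann c (γ s)| ≤ dist (γ t) (γ s) := bus_lip_abs hc _ _
      have h2 : dist (γ t) (γ s) = |t - s| * L := hγ.2.2 t ht s hs
      rw [Real.dist_eq] at hd ⊢
      have h3 : |t - s| * L ≤ (ε/(L+1)) * L :=
        mul_le_mul_of_nonneg_right (le_of_lt hd) hL0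
      have h4 : (ε/(L+1)) * L < ε := by
        rw [div_mul_eq_mul_div, div_lt_iff₀ (by positivity)]
        nlinarith
      calc |busemann c (γ t) - busemann c (γ s)| ≤ |t - s| * L := by rw [← h2]; exact h1
        _ < ε := lt_of_le_of_lt h3 h4
    have hb1 : busemann c (γ 1) = -T := by rw [hγ.2.1]; exact bus_self hc hT0
    have hb0 : 1 ≤ busemann c (γ 0) := by
      rw [hγ.1]
      have := hbusc' T hT0
      linarith
    have h0mem : (0:ℝ) ∈ Set.Icc (busemann c (γ 1)) (busemann c (γ 0)) := by
      rw [hb1]; exact ⟨by linarith, by linarith⟩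
    obtain ⟨s, hsI, hs0⟩ := intermediate_value_Icc' zero_le_one hcont h0mem
    replace hs0 : busemann c (γ s) = 0 := hs0
    refine ⟨γ, s, hγ, hsI, hs0, ?_⟩
    have hzc : T ≤ dist (γ s) (c T) := by
      have h := bus_lip_abs hc (γ s) (c T)
      rw [hs0, bus_self hc hT0, sub_neg_eq_add, zero_add, abs_of_nonneg hT0] at h
      exact h
    have hLT : L ≤ 2*T := by
      have h1 : dist (c' T) o = T := by
        rw [← hc'o, hc' T 0 hT0 le_rfl, show T - 0 = T by ring, abs_of_nonneg hT0]
      have h2 : dist o (c T) = T := by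
        rw [← hco, hc 0 T le_rfl hT0, show (0:ℝ) - T = -T by ring, abs_neg,
          abs_of_nonneg hT0]
      calc L ≤ dist (c' T) o + dist o (c T) := dist_triangle _ _ _
        _ = 2*T := by rw [h1, h2]; ring
    have hsum : dist (γ s) (c' T) + dist (γ s) (c T) = L := by
      have h1 : dist (γ 0) (γ s) = s * L := by
        rw [hγ.2.2 0 ⟨le_rfl, zero_le_one⟩ s hsI, show (0:ℝ) - s = -s by ring, abs_neg,
          abs_of_nonneg hsI.1]
      have h2 : dist (γ s) (γ 1) = (1 - s) * L := by
        rw [hγ.2.2 s hsI 1 ⟨zero_le_one, le_rfl⟩, abs_of_nonpos (by linarith [hsI.2]),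
          neg_sub]
      have h3 : dist (γ s) (c' T) = s * L := by rw [← hγ.1, dist_comm]; exact h1
      have h4 : dist (γ s) (c T) = (1-s)*L := by rw [← hγ.2.1]; exact h2
      rw [h3, h4]; ring
    have hple : dist (γ s) (c' T) ≤ T := by linarith
    have hlip := bus_lip hc' (γ s) (c' T)
    rw [bus_self hc' hT0] at hlip
    linarith
  choose γZ sZ hseg hsIc hbz hbz' using hanchor
  -- anchors are bounded
  have hbdd : ∃ D : ℝ, 0 ≤ D ∧ ∀ k : ℕ, dist o (γZ k (sZ k)) ≤ D := by
    by_contra hcon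
    push_neg at hcon
    have hsel : ∀ j : ℕ, ∃ k : ℕ, (j:ℝ) + 1 < dist o (γZ k (sZ k)) :=
      fun j => hcon ((j:ℝ)+1) (by positivity)
    choose φ hφ using hsel
    have hex_seg : ∀ j : ℕ, ∃ σ : ℝ → X, IsGeodesicSegment σ o (γZ (φ j) (sZ (φ j))) :=
      fun j => hX.1 _ _
    choose σ hσ using hex_seg
    set R : ℕ → ℝ := fun j => dist o (γZ (φ j) (sZ (φ j))) with hRdef
    have hRj : ∀ j : ℕ, (j:ℝ) + 1 ≤ R j := fun j => (hφ j).le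
    have hR0 : ∀ j, 0 < R j := fun j => lt_of_lt_of_le (by positivity) (hRj j)
    have hReq : ∀ j, dist o (γZ (φ j) (sZ (φ j))) = R j := fun j => rfl
    set ψ : ℕ → ℝ → X := fun j t => σ j (max 0 (min 1 (t / R j))) with hψdef
    have hclampI : ∀ w : ℝ, max 0 (min 1 w) ∈ Set.Icc (0:ℝ) 1 :=
      fun w => ⟨le_max_left _ _, max_le zero_le_one (min_le_left _ _)⟩
    have hψformula : ∀ j t, 0 ≤ t → t ≤ R j → ψ j t = σ j (t / R j) := by
      intro j t ht hle
      simp only [hψdef]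
      congr 1
      rw [min_eq_right (by rw [div_le_one (hR0 j)]; exact hle)]
      rw [max_eq_right (by positivity)]
    have hψd : ∀ j, ∀ t t' : ℝ, 0 ≤ t → 0 ≤ t' → t ≤ R j → t' ≤ R j →
        dist (ψ j t) (ψ j t') = |t - t'| := by
      intro j t t' ht ht' hle hle'
      rw [hψformula j t ht hle, hψformula j t' ht' hle']
      have h1 := (hσ j).2.2 (t/R j) ⟨by positivity, by rw [div_le_one (hR0 j)]; exact hle⟩
        (t'/R j) ⟨by positivity, by rw [div_le_one (hR0 j)]; exact hle'⟩
      rw [h1, hReq j]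
      rw [div_sub_div_same, abs_div, abs_of_pos (hR0 j),
        div_mul_cancel₀ _ (ne_of_gt (hR0 j))]
    have hψo : ∀ j, ψ j 0 = o := by
      intro j
      rw [hψformula j 0 le_rfl (hR0 j).le, zero_div]
      exact (hσ j).1
    have hψball : ∀ j t, dist (ψ j t) o ≤ |t| := by
      intro j t
      simp only [hψdef]
      set v := max 0 (min 1 (t / R j)) with hvdef
      have hvI := hclampI (t / R j)
      have h1 : dist (σ j v) o = v * R j := by
        rw [dist_comm, ← (hσ j).1 ]
        rw [(hσ j).2.2 0 ⟨le_rfl, zero_le_one⟩ v hvI, hReq j,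
          show (0:ℝ) - v = -v by ring, abs_neg, abs_of_nonneg hvI.1]
      rw [h1]
      rcases le_total t 0 with h | h
      · have hv0 : v = 0 := by
          rw [hvdef]
          apply max_eq_left
          exact le_trans (min_le_right _ _) (div_nonpos_of_nonpos_of_nonneg h (hR0 j).le)
        rw [hv0, zero_mul]
        positivity
      · have hv1 : v ≤ t / R j := by
          rw [hvdef]
          exact max_le (by positivity) (min_le_right _ _)
        have h2 := mul_le_mul_of_nonneg_right hv1 (hR0 j).le
        rw [div_mul_cancel₀ _ (ne_of_gt (hR0 j))] at h2
        rw [abs_of_nonneg h]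
        exact h2
    have hψbusc : ∀ j t, busemann c (ψ j t) ≤ 0 := by
      intro j t
      simp only [hψdef]
      have hvI := hclampI (t / R j)
      have h := bus_convex hc hX (hσ j) hvI
      rw [hbco, hbz (φ j)] at h
      simpa using h
    have hψbusc' : ∀ j t, busemann c' (ψ j t) ≤ 0 := by
      intro j t
      simp only [hψdef]
      set v := max 0 (min 1 (t / R j)) with hvdef
      have hvI := hclampI (t / R j)
      have h := bus_convex hc' hX (hσ j) hvI
      rw [hbc'o] at h
      have h2 : v * busemann c' (γZ (φ j) (sZ (φ j))) ≤ 0 :=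
        mul_nonpos_of_nonneg_of_nonpos hvI.1 (hbz' (φ j))
      have h3 : (1 - v) * (0:ℝ) + v * busemann c' (γZ (φ j) (sZ (φ j))) ≤ 0 := by
        rw [mul_zero, zero_add]; exact h2
      calc busemann c' (σ j v) ≤ _ := h
        _ ≤ 0 := h3
    set U := Ultrafilter.of (atTop : Filter ℕ) with hUdef
    have hU : (U : Filter ℕ) ≤ atTop := Ultrafilter.of_le _
    have hex : ∀ t : ℝ, ∃ x : X, Tendsto (fun j => ψ j t) (U : Filter ℕ) (𝓝 x) := by
      intro t
      apply exists_ulim U (z := o) (R := |t|)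
      apply Filter.Eventually.of_forall
      intro j
      rw [Metric.mem_closedBall]
      exact hψball j t
    choose ρ hρ using hex
    have hρ0 : ρ 0 = o := by
      have h2 : Tendsto (fun j => ψ j 0) (U : Filter ℕ) (𝓝 o) :=
        Tendsto.congr' (Filter.Eventually.of_forall (fun j => (hψo j).symm)) tendsto_const_nhds
      exact tendsto_nhds_unique (hρ 0) h2
    have hevR : ∀ B : ℝ, ∀ᶠ j : ℕ in (U : Filter ℕ), B ≤ R j := by
      intro B
      apply Filter.Eventually.filter_mono hU
      have h1 : ∀ᶠ j : ℕ in atTop, B ≤ (j:ℝ) + 1 := by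
        have h2 : Tendsto (fun j : ℕ => (j:ℝ)) atTop atTop := tendsto_natCast_atTop_atTop
        exact (h2.eventually_ge_atTop B).mono (fun j hj => by linarith)
      exact h1.mono (fun j hj => le_trans hj (hRj j))
    have hρray : IsGeodesicRay ρ := by
      intro s t hs ht
      have h1 : Tendsto (fun j => dist (ψ j s) (ψ j t)) (U:Filter ℕ) (𝓝 (dist (ρ s) (ρ t))) :=
        (hρ s).dist (hρ t)
      have h2 : ∀ᶠ j in (U:Filter ℕ), dist (ψ j s) (ψ j t) = |s - t| := by
        refine (hevR (max s t)).mono ?_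
        intro j hj
        exact hψd j s t hs ht (le_trans (le_max_left _ _) hj) (le_trans (le_max_right _ _) hj)
      have h3 : Tendsto (fun j => dist (ψ j s) (ψ j t)) (U:Filter ℕ) (𝓝 |s - t|) :=
        Tendsto.congr' (h2.mono (fun j hj => hj.symm)) tendsto_const_nhds
      exact tendsto_nhds_unique h1 h3
    have hlipb : LipschitzWith 1 (busemann c) := LipschitzWith.of_dist_le_mul (by
      intro x y; rw [Real.dist_eq]; simpa using bus_lip_abs hc x y)
    have hlipb' : LipschitzWith 1 (busemann c') := LipschitzWith.of_dist_le_mul (by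
      intro x y; rw [Real.dist_eq]; simpa using bus_lip_abs hc' x y)
    have hbuslim : ∀ t : ℝ, busemann c (ρ t) ≤ 0 := by
      intro t
      have h1 : Tendsto (fun j => busemann c (ψ j t)) (U:Filter ℕ) (𝓝 (busemann c (ρ t))) :=
        (hlipb.continuous.tendsto (ρ t)).comp (hρ t)
      exact le_of_tendsto h1 (Filter.Eventually.of_forall (fun j => hψbusc j t))
    have hbuslim' : ∀ t : ℝ, busemann c' (ρ t) ≤ 0 := by
      intro t
      have h1 : Tendsto (fun j => busemann c' (ψ j t)) (U:Filter ℕ) (𝓝 (busemann c' (ρ t))) :=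
        (hlipb'.continuous.tendsto (ρ t)).comp (hρ t)
      exact le_of_tendsto h1 (Filter.Eventually.of_forall (fun j => hψbusc' j t))
    by_cases hAs : Asymptotic c ρ
    · obtain ⟨M, hM⟩ := hAs
      have hM0 : 0 ≤ M := le_trans dist_nonneg (hM 0 le_rfl)
      set t : ℝ := K + M + 1 with htdef
      have ht0 : 0 ≤ t := by positivity
      have h1 := hbusc t ht0
      have h2 := bus_lip hc' (c t) (ρ t)
      have h3 := hM t ht0
      have h4 := hbuslim' t
      simp only [htdef] at h1
      linarith
    · obtain ⟨Kρ, hKρ0, hKρ⟩ := grb hX hc hco hproj hbgi hρray hρ0 hAs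
      have h1 : (Kρ + 1) - Kρ ≤ busemann c (ρ (Kρ + 1)) := by
        apply bus_ge
        intro u hu
        have := hKρ (Kρ+1) u (by positivity) hu
        linarith
      have h2 := hbuslim (Kρ + 1)
      linarith
  obtain ⟨D, hD0, hDb⟩ := hbdd
  have hcast : ∀ k : ℕ, (0:ℝ) ≤ (k:ℝ) := fun k => Nat.cast_nonneg k
  have hTk0 : ∀ k : ℕ, (0:ℝ) ≤ T2 + k := by
    intro k; simp only [hT2def]; linarith [hcast k]
  have hdc' : ∀ k : ℕ, dist o (c' (T2 + k)) = T2 + k := by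
    intro k
    rw [← hc'o, hc' 0 _ le_rfl (hTk0 k), show (0:ℝ) - (T2 + k) = -(T2+k) by ring,
      abs_neg, abs_of_nonneg (hTk0 k)]
  have hdc : ∀ k : ℕ, dist o (c (T2 + k)) = T2 + k := by
    intro k
    rw [← hco, hc 0 _ le_rfl (hTk0 k), show (0:ℝ) - (T2 + k) = -(T2+k) by ring,
      abs_neg, abs_of_nonneg (hTk0 k)]
  set Lk : ℕ → ℝ := fun k => dist (c' (T2 + k)) (c (T2 + k)) with hLkdef
  set ak : ℕ → ℝ := fun k => dist (γZ k (sZ k)) (c' (T2 + k)) with hakdef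
  set bk : ℕ → ℝ := fun k => dist (γZ k (sZ k)) (c (T2 + k)) with hbkdef
  have hLk_rfl : ∀ k, dist (c' (T2 + (k:ℕ):ℝ)) (c (T2 + k)) = Lk k := fun k => rfl
  have hak_rfl : ∀ k, dist (γZ k (sZ k)) (c' (T2 + k)) = ak k := fun k => rfl
  have hbk_rfl : ∀ k, dist (γZ k (sZ k)) (c (T2 + k)) = bk k := fun k => rfl
  have haT : ∀ k, |ak k - (T2 + k)| ≤ D := by
    intro k
    have h := abs_dist_sub_le (γZ k (sZ k)) o (c' (T2 + k))
    rw [hdc' k, hak_rfl k] at h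
    refine le_trans h ?_
    rw [dist_comm]; exact hDb k
  have hbT : ∀ k, |bk k - (T2 + k)| ≤ D := by
    intro k
    have h := abs_dist_sub_le (γZ k (sZ k)) o (c (T2 + k))
    rw [hdc k, hbk_rfl k] at h
    refine le_trans h ?_
    rw [dist_comm]; exact hDb k
  have hak_eq : ∀ k, sZ k * Lk k = ak k := by
    intro k
    have h := (hseg k).2.2 0 ⟨le_rfl, zero_le_one⟩ (sZ k) (hsIc k)
    rw [hLk_rfl k, show (0:ℝ) - sZ k = -(sZ k) by ring, abs_neg,
      abs_of_nonneg (hsIc k).1, (hseg k).1] at h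
    rw [← hak_rfl k, dist_comm]
    exact h.symm
  have hbk_eq : ∀ k, (1 - sZ k) * Lk k = bk k := by
    intro k
    have h := (hseg k).2.2 (sZ k) (hsIc k) 1 ⟨zero_le_one, le_rfl⟩
    rw [hLk_rfl k, abs_of_nonpos (by linarith [(hsIc k).2]), neg_sub, (hseg k).2.1] at h
    rw [← hbk_rfl k]
    exact h.symm
  set lk : ℕ → ℝ → X := fun k t => γZ k (max 0 (min 1 (sZ k - t / Lk k))) with hlkdef
  have hev : ∀ B : ℝ, ∀ᶠ k : ℕ in atTop, B ≤ (k:ℝ) :=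
    fun B => tendsto_natCast_atTop_atTop.eventually_ge_atTop B
  have hgood : ∀ t : ℝ, ∀ᶠ k : ℕ in atTop,
      |t| + 1 ≤ ak k ∧ |t| + 1 ≤ bk k ∧ 0 < Lk k := by
    intro t
    refine (hev (|t| + 1 + D - T2)).mono ?_
    intro k hk
    have h1 : |t| + 1 ≤ (T2 + k) - D := by linarith
    have ha := (abs_le.mp (haT k)).1
    have hb := (abs_le.mp (hbT k)).1
    have hsum : ak k + bk k = Lk k := by
      rw [← hak_eq k, ← hbk_eq k]; ring
    have hL : 0 < Lk k := by nlinarith [abs_nonneg t]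
    exact ⟨by linarith, by linarith, hL⟩
  have hlk_formula : ∀ (k : ℕ) (t : ℝ), 0 < Lk k → -(bk k) ≤ t → t ≤ ak k →
      lk k t = γZ k (sZ k - t / Lk k) ∧ (sZ k - t / Lk k) ∈ Set.Icc (0:ℝ) 1 := by
    intro k t hL hlo hhi
    have hsum : ak k + bk k = Lk k := by rw [← hak_eq k, ← hbk_eq k]; ring
    have hsak : sZ k = ak k / Lk k := by
      rw [eq_div_iff (ne_of_gt hL)]; exact hak_eq k
    have hv0 : 0 ≤ sZ k - t / Lk k := by
      rw [hsak, div_sub_div_same]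
      apply div_nonneg (by linarith) hL.le
    have hv1 : sZ k - t / Lk k ≤ 1 := by
      rw [hsak, div_sub_div_same, div_le_one hL]
      linarith
    refine ⟨?_, ⟨hv0, hv1⟩⟩
    simp only [hlkdef]
    congr 1
    rw [min_eq_right hv1, max_eq_right hv0]
  have hlkball : ∀ (k : ℕ) (t : ℝ), 0 < Lk k → -(bk k) ≤ t → t ≤ ak k →
      dist (lk k t) o ≤ D + |t| := by
    intro k t hL hlo hhi
    obtain ⟨hf, hvI⟩ := hlk_formula k t hL hlo hhi
    rw [hf]
    have h1 : dist (γZ k (sZ k - t/Lk k)) (γZ k (sZ k)) = |t| := by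
      rw [(hseg k).2.2 _ hvI _ (hsIc k), hLk_rfl k]
      rw [show sZ k - t/Lk k - sZ k = -(t/Lk k) by ring, abs_neg, abs_div,
        abs_of_pos hL, div_mul_cancel₀ _ (ne_of_gt hL)]
    calc dist (γZ k (sZ k - t/Lk k)) o
        ≤ dist (γZ k (sZ k - t/Lk k)) (γZ k (sZ k)) + dist (γZ k (sZ k)) o :=
          dist_triangle _ _ _
      _ ≤ D + |t| := by
          rw [h1, dist_comm (γZ k (sZ k)) o]
          linarith [hDb k]
  set U := Ultrafilter.of (atTop : Filter ℕ) with hUdef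
  have hU : (U : Filter ℕ) ≤ atTop := Ultrafilter.of_le _
  have hdomain : ∀ t : ℝ, ∀ k : ℕ, (|t| + 1 ≤ ak k ∧ |t| + 1 ≤ bk k ∧ 0 < Lk k) →
      (0 < Lk k ∧ -(bk k) ≤ t ∧ t ≤ ak k) := by
    rintro t k ⟨h1, h2, h3⟩
    refine ⟨h3, ?_, ?_⟩
    · have := neg_abs_le t; linarith
    · have := le_abs_self t; linarith
  have hex : ∀ t : ℝ, ∃ x : X, Tendsto (fun k => lk k t) (U:Filter ℕ) (𝓝 x) := by
    intro t
    apply exists_ulim U (z := o) (R := D + |t|)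
    apply Filter.Eventually.filter_mono hU
    refine (hgood t).mono ?_
    intro k hk
    obtain ⟨h3, h4, h5⟩ := hdomain t k hk
    rw [Metric.mem_closedBall]
    exact hlkball k t h3 h4 h5
  choose l hl using hex
  refine ⟨l, ?_, ?_, ?_⟩
  · -- global geodesic
    intro s t
    have h1 : Tendsto (fun k => dist (lk k s) (lk k t)) (U:Filter ℕ)
        (𝓝 (dist (l s) (l t))) := (hl s).dist (hl t)
    have h2 : ∀ᶠ k in (U:Filter ℕ), dist (lk k s) (lk k t) = |s - t| := by
      apply Filter.Eventually.filter_mono hU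
      refine ((hgood s).and (hgood t)).mono ?_
      rintro k ⟨hks, hkt⟩
      obtain ⟨hL, hs1, hs2⟩ := hdomain s k hks
      obtain ⟨_, ht1, ht2⟩ := hdomain t k hkt
      obtain ⟨hfs, hvIs⟩ := hlk_formula k s hL hs1 hs2
      obtain ⟨hft, hvIt⟩ := hlk_formula k t hL ht1 ht2
      rw [hfs, hft, (hseg k).2.2 _ hvIs _ hvIt, hLk_rfl k]
      rw [show (sZ k - s/Lk k) - (sZ k - t/Lk k) = (t - s)/Lk k by ring]
      rw [abs_div, abs_of_pos hL, div_mul_cancel₀ _ (ne_of_gt hL), abs_sub_comm]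
    exact tendsto_nhds_unique h1
      (Tendsto.congr' (h2.mono fun k hk => hk.symm) tendsto_const_nhds)
  · -- asymptotic to c in negative direction
    refine ⟨2*D, ?_⟩
    intro t ht
    have h1 : Tendsto (fun k => dist (lk k (-t)) (c t)) (U:Filter ℕ)
        (𝓝 (dist (l (-t)) (c t))) := (hl (-t)).dist tendsto_const_nhds
    apply le_of_tendsto h1
    apply Filter.Eventually.filter_mono hU
    refine (hgood t).mono ?_
    intro k hk
    obtain ⟨h1', h2', hL⟩ := hk
    have hbk0 : 0 < bk k := by linarith [abs_nonneg t]
    have htbk : t ≤ bk k := by linarith [le_abs_self t]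
    have hlo : -(bk k) ≤ -t := by linarith
    have hhi : -t ≤ ak k := by linarith [abs_nonneg t]
    obtain ⟨hf, hvI⟩ := hlk_formula k (-t) hL hlo hhi
    -- comparison segment on γZ from anchor to c (T2+k)
    have hsub := seg_sub (hseg k) (hsIc k) (⟨zero_le_one, le_rfl⟩ : (1:ℝ) ∈ Set.Icc (0:ℝ) 1)
    rw [(hseg k).2.1] at hsub
    have hoseg := ray_from_o_seg hc hco (hTk0 k)
    set v : ℝ := t / bk k with hvdef
    have hvmem : v ∈ Set.Icc (0:ℝ) 1 := by
      constructor
      · exact div_nonneg ht hbk0.le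
      · rw [hvdef, div_le_one hbk0]; exact htbk
    have hcomp := geodesic_convexity hX hsub hoseg hvmem
    have hzero : dist (c (T2 + k)) (c (T2 + k)) = 0 := dist_self _
    have hone : (fun v => c (v * (T2 + k))) v = c (v * (T2 + k)) := rfl
    have hDZ : dist (γZ k (sZ k)) o ≤ D := by rw [dist_comm]; exact hDb k
    have hcompD : dist (γZ k (sZ k + v * (1 - sZ k))) (c (v * (T2 + k))) ≤ D := by
      have h := hcomp
      simp only [hzero] at h
      calc dist (γZ k (sZ k + v * (1 - sZ k))) (c (v * (T2 + k)))
          ≤ (1 - v) * dist (γZ k (sZ k)) o + v * 0 := h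
        _ ≤ D := by nlinarith [hvmem.1, hvmem.2, dist_nonneg (x := γZ k (sZ k)) (y := o)]
    have harg : sZ k + v * (1 - sZ k) = sZ k - (-t) / Lk k := by
      have he1 : (1:ℝ) - sZ k = bk k / Lk k := by
        rw [eq_div_iff (ne_of_gt hL)]; exact hbk_eq k
      rw [hvdef, he1]
      field_simp
      ring
    rw [harg] at hcompD
    rw [hf]
    have hparam : dist (c (v * (T2 + k))) (c t) ≤ D := by
      have hp0 : 0 ≤ v * (T2 + k) := mul_nonneg hvmem.1 (hTk0 k)
      rw [hc _ _ hp0 ht]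
      have he : v * (T2 + k) - t = v * ((T2 + k) - bk k) := by
        rw [hvdef]; field_simp
      rw [he, abs_mul, abs_of_nonneg hvmem.1]
      have h2 : |T2 + (k:ℝ) - bk k| ≤ D := by
        rw [abs_sub_comm]; exact hbT k
      nlinarith [hvmem.1, hvmem.2, abs_nonneg (T2 + (k:ℝ) - bk k)]
    calc dist (γZ k (sZ k - (-t) / Lk k)) (c t)
        ≤ dist (γZ k (sZ k - (-t) / Lk k)) (c (v * (T2 + k)))
          + dist (c (v * (T2 + k))) (c t) := dist_triangle _ _ _
      _ ≤ 2*D := by linarith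
  · -- asymptotic to c'
    refine ⟨2*D, ?_⟩
    intro t ht
    have h1 : Tendsto (fun k => dist (c' t) (lk k t)) (U:Filter ℕ)
        (𝓝 (dist (c' t) (l t))) := Tendsto.dist tendsto_const_nhds (hl t)
    rw [show dist (l t) (c' t) = dist (c' t) (l t) from dist_comm _ _]
    apply le_of_tendsto h1
    apply Filter.Eventually.filter_mono hU
    refine (hgood t).mono ?_
    intro k hk
    obtain ⟨h1', h2', hL⟩ := hk
    have hak0 : 0 < ak k := by linarith [abs_nonneg t]
    have htak : t ≤ ak k := by linarith [le_abs_self t]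
    have hlo : -(bk k) ≤ t := by nlinarith [abs_nonneg t]
    obtain ⟨hf, hvI⟩ := hlk_formula k t hL hlo htak
    have hsub := seg_sub (hseg k) (hsIc k) (⟨le_rfl, zero_le_one⟩ : (0:ℝ) ∈ Set.Icc (0:ℝ) 1)
    rw [(hseg k).1] at hsub
    have hoseg := ray_from_o_seg hc' hc'o (hTk0 k)
    set v : ℝ := t / ak k with hvdef
    have hvmem : v ∈ Set.Icc (0:ℝ) 1 := by
      constructor
      · exact div_nonneg ht hak0.le
      · rw [hvdef, div_le_one hak0]; exact htak
    have hcomp := geodesic_convexity hX hsub hoseg hvmem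
    have hcompD : dist (γZ k (sZ k + v * (0 - sZ k))) (c' (v * (T2 + k))) ≤ D := by
      have h := hcomp
      have hzero' : dist (c' (T2 + (k:ℝ))) (c' (T2 + (k:ℝ))) = 0 := dist_self _
      simp only [hzero'] at h
      calc dist (γZ k (sZ k + v * (0 - sZ k))) (c' (v * (T2 + k)))
          ≤ (1 - v) * dist (γZ k (sZ k)) o + v * 0 := h
        _ ≤ D := by
            have := hDb k
            rw [dist_comm o (γZ k (sZ k))] at this
            nlinarith [hvmem.1, hvmem.2, dist_nonneg (x := γZ k (sZ k)) (y := o)]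
    have harg : sZ k + v * (0 - sZ k) = sZ k - t / Lk k := by
      have he1 : sZ k = ak k / Lk k := by
        rw [eq_div_iff (ne_of_gt hL)]; exact hak_eq k
      have hvs : v * sZ k = t / Lk k := by
        rw [hvdef, he1, div_mul_div_comm, mul_comm t (ak k),
          mul_div_mul_left _ _ (ne_of_gt hak0)]
      calc sZ k + v * (0 - sZ k) = sZ k - v * sZ k := by ring
        _ = sZ k - t / Lk k := by rw [hvs]
    rw [harg] at hcompD
    rw [hf]
    have hparam : dist (c' (v * (T2 + k))) (c' t) ≤ D := by
      have hp0 : 0 ≤ v * (T2 + k) := mul_nonneg hvmem.1 (hTk0 k)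
      rw [hc' _ _ hp0 ht]
      have he : v * (T2 + k) - t = v * ((T2 + k) - ak k) := by
        rw [hvdef]; field_simp
      rw [he, abs_mul, abs_of_nonneg hvmem.1]
      have h2 : |T2 + (k:ℝ) - ak k| ≤ D := by
        rw [abs_sub_comm]; exact haT k
      nlinarith [hvmem.1, hvmem.2, abs_nonneg (T2 + (k:ℝ) - ak k)]
    calc dist (c' t) (γZ k (sZ k - t / Lk k))
        ≤ dist (c' t) (c' (v * (T2 + k)))
          + dist (c' (v * (T2 + k))) (γZ k (sZ k - t / Lk k)) := dist_triangle _ _ _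
      _ ≤ 2*D := by
          rw [dist_comm (c' t) (c' (v * (T2 + k))), dist_comm (c' (v * (T2 + k))) (γZ k (sZ k - t / Lk k))]
          linarith
end

section
/- Let X be a proper complete CAT(0) space and let c, c' be distinct geodesic rays starting at o, with c κ-contracting for a sublinear function κ. If h, h' are horofunctions associated to c, c' respectively, then h(c'(s)) → ∞ as s → ∞ and h'(c(t)) → ∞ as t → ∞. -/
open Metric Set Filter

variable {X : Type*} [MetricSpace X]

section Aux
variable {X : Type*} [MetricSpace X]

lemma le_of_sq_le_sq' {a b : ℝ} (h : a^2 ≤ b^2) (hb : 0 ≤ b) : a ≤ b := by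
  nlinarith [sq_nonneg (a - b), sq_nonneg (a + b)]

lemma ray_dist {c : ℝ → X} (hc : IsGeodesicRay c) {t : ℝ} (ht : 0 ≤ t) :
    dist (c 0) (c t) = t := by
  rw [hc 0 t le_rfl ht, abs_of_nonpos (by linarith)]; ring

omit [MetricSpace X] in
lemma mem_rayImage {c : ℝ → X} {u : ℝ} (hu : 0 ≤ u) : c u ∈ rayImage c := ⟨u, hu, rfl⟩

lemma seg_scale {c : ℝ → X} (hc : IsGeodesicRay c) {a b : ℝ} (ha : 0 ≤ a) (hb : 0 ≤ b) :
    IsGeodesicSegment (fun lam => c (a + lam * (b - a))) (c a) (c b) := by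
  refine ⟨by norm_num, by norm_num, ?_⟩
  intro s hs t ht
  have h1 : 0 ≤ a + s * (b - a) := by nlinarith [hs.1, hs.2]
  have h2 : 0 ≤ a + t * (b - a) := by nlinarith [ht.1, ht.2]
  rw [hc _ _ h1 h2, hc a b ha hb,
    show a + s*(b-a) - (a + t*(b-a)) = (s-t)*(b-a) by ring, abs_mul, abs_sub_comm b a]

lemma dist_convex (hX : CAT0Space X) {γ : ℝ → X} {x y : X} (hseg : IsGeodesicSegment γ x y)
    (z : X) {lam : ℝ} (h0 : 0 ≤ lam) (h1 : lam ≤ 1) :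
    dist z (γ lam) ≤ (1 - lam) * dist z x + lam * dist z y := by
  have hCN := hX.2 γ x y hseg z lam ⟨h0, h1⟩
  have htri := abs_le.1 (abs_dist_sub_le x y z)
  rw [dist_comm x z, dist_comm y z] at htri
  have key : (dist z x - dist z y)^2 ≤ dist x y ^ 2 := by
    nlinarith [htri.1, htri.2, dist_nonneg (x := x) (y := y)]
  have hrhs : 0 ≤ (1-lam) * dist z x + lam * dist z y :=
    add_nonneg (mul_nonneg (by linarith) dist_nonneg) (mul_nonneg h0 dist_nonneg)
  refine le_of_sq_le_sq' ?_ hrhs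
  nlinarith [mul_nonneg (mul_nonneg h0 (by linarith : (0:ℝ) ≤ 1 - lam)) (sub_nonneg.2 key)]

lemma busemann_bddBelow {c : ℝ → X} (hc : IsGeodesicRay c) (x : X) :
    BddBelow (Set.range fun t : Set.Ici (0:ℝ) => dist x (c (t:ℝ)) - (t:ℝ)) := by
  refine ⟨-dist x (c 0), ?_⟩
  rintro _ ⟨⟨t, ht⟩, rfl⟩
  have h1 : dist (c 0) (c t) = t := ray_dist hc ht
  have h2 := dist_triangle (c 0) x (c t)
  rw [dist_comm (c 0) x] at h2
  simp only
  linarith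

instance : Nonempty (Set.Ici (0:ℝ)) := ⟨⟨0, Set.self_mem_Ici⟩⟩

lemma busemann_le {c : ℝ → X} (hc : IsGeodesicRay c) (x : X) {t : ℝ} (ht : 0 ≤ t) :
    busemann c x ≤ dist x (c t) - t :=
  ciInf_le (busemann_bddBelow hc x) (⟨t, ht⟩ : Set.Ici (0:ℝ))

lemma busemann_ge {c : ℝ → X} {x : X} {B : ℝ}
    (h : ∀ t : ℝ, 0 ≤ t → B ≤ dist x (c t) - t) : B ≤ busemann c x := by
  exact le_ciInf fun t => h t t.2

lemma busemann_lt {c : ℝ → X} {x : X} {B : ℝ} (h : busemann c x < B) :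
    ∃ t : ℝ, 0 ≤ t ∧ dist x (c t) - t < B := by
  obtain ⟨⟨t, ht⟩, h'⟩ := exists_lt_of_ciInf_lt h
  exact ⟨t, ht, h'⟩

lemma busemann_origin {c : ℝ → X} (hc : IsGeodesicRay c) : busemann c (c 0) = 0 := by
  refine le_antisymm ?_ (busemann_ge fun t ht => by rw [ray_dist hc ht]; linarith)
  have := busemann_le hc (c 0) (le_refl (0:ℝ))
  simpa using this

end Aux
section Aux2
variable {X : Type*} [MetricSpace X]

lemma seg_ray {c : ℝ → X} (hc : IsGeodesicRay c) {S : ℝ} (hS : 0 ≤ S) :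
    IsGeodesicSegment (fun lam => c (lam * S)) (c 0) (c S) := by
  have h := seg_scale hc le_rfl hS
  have e : (fun lam => c (0 + lam * (S - 0))) = fun lam => c (lam * S) := by
    funext lam; norm_num
  rwa [e] at h

lemma two_rays (hX : CAT0Space X) {c₁ c₂ : ℝ → X} (h1 : IsGeodesicRay c₁)
    (h2 : IsGeodesicRay c₂) (h00 : c₁ 0 = c₂ 0) {lam S : ℝ}
    (hl0 : 0 ≤ lam) (hl1 : lam ≤ 1) (hS : 0 ≤ S) :
    dist (c₁ (lam * S)) (c₂ (lam * S)) ≤ lam * dist (c₁ S) (c₂ S) := by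
  have hls : 0 ≤ lam * S := mul_nonneg hl0 hS
  have hA : dist (c₁ (lam*S)) (c₂ (lam*S)) ^ 2 ≤
      (1 - lam) * dist (c₁ (lam*S)) (c₂ 0) ^ 2 + lam * dist (c₁ (lam*S)) (c₂ S) ^ 2
        - lam * (1 - lam) * dist (c₂ 0) (c₂ S) ^ 2 :=
    hX.2 _ _ _ (seg_ray h2 hS) (c₁ (lam*S)) lam ⟨hl0, hl1⟩
  have hB : dist (c₂ S) (c₁ (lam*S)) ^ 2 ≤
      (1 - lam) * dist (c₂ S) (c₁ 0) ^ 2 + lam * dist (c₂ S) (c₁ S) ^ 2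
        - lam * (1 - lam) * dist (c₁ 0) (c₁ S) ^ 2 :=
    hX.2 _ _ _ (seg_ray h1 hS) (c₂ S) lam ⟨hl0, hl1⟩
  rw [show dist (c₁ (lam*S)) (c₂ 0) = lam * S by
        rw [← h00, dist_comm]; exact ray_dist h1 hls] at hA
  rw [ray_dist h2 hS] at hA
  rw [show dist (c₂ S) (c₁ 0) = S by rw [h00, dist_comm]; exact ray_dist h2 hS] at hB
  rw [ray_dist h1 hS, dist_comm (c₂ S) (c₁ (lam*S)), dist_comm (c₂ S) (c₁ S)] at hB
  refine le_of_sq_le_sq' ?_ (mul_nonneg hl0 dist_nonneg)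
  nlinarith [mul_le_mul_of_nonneg_left hB hl0]

lemma busemann_convex (hX : CAT0Space X) {c₁ c₂ : ℝ → X} (h1 : IsGeodesicRay c₁)
    (h2 : IsGeodesicRay c₂) (h00 : c₂ 0 = c₁ 0) {s S : ℝ}
    (hs : 0 ≤ s) (hsS : s ≤ S) (hS : 0 < S) :
    busemann c₁ (c₂ s) ≤ (s / S) * busemann c₁ (c₂ S) := by
  have hl0 : 0 ≤ s / S := div_nonneg hs hS.le
  have hl1 : s / S ≤ 1 := (div_le_one hS).2 hsS
  have hkey : ∀ t : ℝ, 0 ≤ t →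
      dist (c₂ s) (c₁ t) - t ≤ (s / S) * (dist (c₂ S) (c₁ t) - t) := by
    intro t ht
    have hcv := dist_convex hX (seg_ray h2 hS.le) (c₁ t) hl0 hl1
    rw [div_mul_cancel₀ s hS.ne'] at hcv
    rw [h00, dist_comm (c₁ t) (c₁ 0), ray_dist h1 ht] at hcv
    rw [dist_comm (c₂ s) (c₁ t), dist_comm (c₂ S) (c₁ t)]
    linarith
  rcases eq_or_lt_of_le hs with h0 | hpos
  · rw [← h0, h00, busemann_origin h1]
    simp
  · have hlpos : 0 < s / S := div_pos hpos hS
    refine le_of_forall_pos_le_add fun ε hε => ?_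
    obtain ⟨t, ht, hft⟩ := busemann_lt
      (lt_add_of_pos_right (busemann c₁ (c₂ S)) (div_pos hε hlpos))
    calc busemann c₁ (c₂ s) ≤ dist (c₂ s) (c₁ t) - t := busemann_le h1 _ ht
      _ ≤ (s / S) * (dist (c₂ S) (c₁ t) - t) := hkey t ht
      _ ≤ (s / S) * (busemann c₁ (c₂ S) + ε / (s / S)) :=
          mul_le_mul_of_nonneg_left hft.le hl0
      _ = (s / S) * busemann c₁ (c₂ S) + ε := by field_simp
  
lemma busemann_convex' (hX : CAT0Space X) {c₁ c₂ : ℝ → X} (h1 : IsGeodesicRay c₁)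
    (h2 : IsGeodesicRay c₂) (h00 : c₂ 0 = c₁ 0) {s S : ℝ}
    (hs : 0 ≤ s) (hsS : s ≤ S) (hS : 0 < S) :
    S * busemann c₁ (c₂ s) ≤ s * busemann c₁ (c₂ S) := by
  have h := mul_le_mul_of_nonneg_left (busemann_convex hX h1 h2 h00 hs hsS hS) hS.le
  have e : S * (s / S * busemann c₁ (c₂ S)) = s * busemann c₁ (c₂ S) := by
    field_simp
  linarith [h, e.le, e.ge]

lemma bus_tendsto_of_pos (hX : CAT0Space X) {c₁ c₂ : ℝ → X} (h1 : IsGeodesicRay c₁)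
    (h2 : IsGeodesicRay c₂) (h00 : c₂ 0 = c₁ 0) {s₀ : ℝ} (hs₀ : 0 < s₀)
    (hpos : 0 < busemann c₁ (c₂ s₀)) :
    Tendsto (fun s => busemann c₁ (c₂ s)) atTop atTop := by
  set G := busemann c₁ (c₂ s₀) with hG
  have hbound : ∀ s, s₀ ≤ s → (G / s₀) * s ≤ busemann c₁ (c₂ s) := by
    intro s hs
    have hcv := busemann_convex' hX h1 h2 h00 hs₀.le hs (lt_of_lt_of_le hs₀ hs)
    rw [div_mul_eq_mul_div, div_le_iff₀ hs₀]
    linarith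
  refine tendsto_atTop_mono' atTop ((eventually_ge_atTop s₀).mono hbound)
    (Tendsto.const_mul_atTop (div_pos hpos hs₀) tendsto_id)

end Aux2
section Aux3
variable {X : Type*} [MetricSpace X]

lemma proj_spec {c : ℝ → X} {proj : X → X} (hproj : IsProjOnto proj (rayImage c))
    (hc : IsGeodesicRay c) (x : X) :
    ∃ t₀ : ℝ, 0 ≤ t₀ ∧ proj x = c t₀ ∧ dist (c 0) (proj x) = t₀ := by
  obtain ⟨t₀, ht₀, he⟩ := (hproj x).1
  exact ⟨t₀, ht₀, he.symm, by rw [← he]; exact ray_dist hc ht₀⟩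

lemma proj_ineq (hX : CAT0Space X) {c : ℝ → X} (hc : IsGeodesicRay c)
    {proj : X → X} (hproj : IsProjOnto proj (rayImage c)) (x : X) {u : ℝ} (hu : 0 ≤ u) :
    dist x (proj x) ^ 2 + dist (proj x) (c u) ^ 2 ≤ dist x (c u) ^ 2 := by
  obtain ⟨t₀, ht₀, hpx, -⟩ := proj_spec hproj hc x
  refine le_of_forall_pos_le_add fun ε hε => ?_
  set P := dist (proj x) (c u) with hP
  set lam := min 1 (ε / (P^2 + 1)) with hlam
  have hl1 : lam ≤ 1 := min_le_left _ _
  have hlp : 0 < lam := lt_min one_pos (div_pos hε (by positivity))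
  have hseg := seg_scale hc ht₀ hu
  have hCN : dist x (c (t₀ + lam * (u - t₀))) ^ 2 ≤
      (1-lam) * dist x (proj x)^2 + lam * dist x (c u)^2 - lam*(1-lam) * P^2 := by
    have h := hX.2 _ _ _ hseg x lam ⟨hlp.le, hl1⟩
    rw [← hpx] at h
    exact h
  have hmem : c (t₀ + lam * (u - t₀)) ∈ rayImage c :=
    mem_rayImage (by nlinarith [hlp.le, hl1])
  have hmin : dist x (proj x) ≤ dist x (c (t₀ + lam * (u - t₀))) := (hproj x).2 _ hmem
  have hsq : dist x (proj x)^2 ≤ dist x (c (t₀ + lam * (u - t₀)))^2 :=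
    pow_le_pow_left₀ dist_nonneg hmin 2
  have hlP : lam * P^2 ≤ ε := by
    calc lam * P^2 ≤ (ε / (P^2+1)) * P^2 :=
          mul_le_mul_of_nonneg_right (min_le_right _ _) (sq_nonneg _)
      _ ≤ ε := by rw [div_mul_eq_mul_div, div_le_iff₀ (by positivity)]; nlinarith
  have h2 : lam * (dist x (proj x)^2) + lam * P^2 ≤
      lam * (dist x (c u)^2) + lam * (lam * P^2) := by nlinarith [hsq, hCN]
  have h3 : lam * (dist x (proj x)^2 + P^2) ≤ lam * (dist x (c u)^2 + ε) := by
    nlinarith [mul_le_mul_of_nonneg_left hlP hlp.le]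
  nlinarith [h3, hlp]

lemma dist_ray_ge_param {c : ℝ → X} (hc : IsGeodesicRay c) (hX : CAT0Space X)
    {proj : X → X} (hproj : IsProjOnto proj (rayImage c)) (x : X) {u : ℝ} (hu : 0 ≤ u) :
    |u - dist (c 0) (proj x)| ≤ dist x (c u) := by
  obtain ⟨t₀, ht₀, hpx, hd⟩ := proj_spec hproj hc x
  have h := proj_ineq hX hc hproj x hu
  have hPe : dist (proj x) (c u) = |t₀ - u| := by rw [hpx]; exact hc t₀ u ht₀ hu
  rw [hd, ← abs_sub_comm, ← hPe]
  refine le_of_sq_le_sq' ?_ dist_nonneg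
  nlinarith [sq_nonneg (dist x (proj x))]

lemma busemann_ge_neg_param {c : ℝ → X} (hc : IsGeodesicRay c) (hX : CAT0Space X)
    {proj : X → X} (hproj : IsProjOnto proj (rayImage c)) (x : X) :
    -(dist (c 0) (proj x)) ≤ busemann c x := by
  refine busemann_ge fun u hu => ?_
  have h := dist_ray_ge_param hc hX hproj x hu
  have := abs_le.1 h
  linarith [this.1, this.2, le_abs_self (u - dist (c 0) (proj x))]

lemma proj_dist_le {o : X} {c : ℝ → X} (hco : c 0 = o) {proj : X → X}
    (hproj : IsProjOnto proj (rayImage c)) {κ : ℝ → ℝ} {n : ℝ}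
    (hcontr' : ∀ (x : X) (r : ℝ), 0 < r → Metric.closedBall x r ∩ rayImage c = ∅ →
      Metric.diam (proj '' Metric.closedBall x r) ≤ n * κ (dist o x))
    {x a b : X} {r : ℝ} (hr : 0 < r)
    (hdisj : Metric.closedBall x r ∩ rayImage c = ∅)
    (ha : a ∈ Metric.closedBall x r) (hb : b ∈ Metric.closedBall x r) :
    dist (proj a) (proj b) ≤ n * κ (dist o x) := by
  have hbd : Bornology.IsBounded (proj '' Metric.closedBall x r) := by
    apply (Metric.isBounded_closedBall (x := o) (r := 2 * (dist o x + r))).subset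
    rintro _ ⟨z, hz, rfl⟩
    rw [Metric.mem_closedBall] at hz ⊢
    have h1 := dist_triangle (proj z) z o
    have h2 : dist z (proj z) ≤ dist z o := by
      have := (hproj z).2 (c 0) (mem_rayImage le_rfl)
      rwa [hco] at this
    have h3 := dist_triangle z x o
    have e1 : dist (proj z) z = dist z (proj z) := dist_comm _ _
    have e2 : dist z o = dist o z := dist_comm _ _
    have e3 : dist x o = dist o x := dist_comm _ _
    have e4 : dist z x = dist x z := dist_comm _ _
    linarith [hz]
  exact le_trans
    (Metric.dist_le_diam_of_mem hbd (Set.mem_image_of_mem _ ha) (Set.mem_image_of_mem _ hb))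
    (hcontr' x r hr hdisj)

end Aux3
section Aux4
variable {X : Type*} [MetricSpace X]

set_option maxHeartbeats 1000000 in
lemma not_forall_nonpos (hX : CAT0Space X) {o : X} {c c' : ℝ → X}
    (hc : IsGeodesicRay c) (hco : c 0 = o)
    (hc' : IsGeodesicRay c') (hc'o : c' 0 = o)
    (hdist : ∃ t : ℝ, 0 ≤ t ∧ c t ≠ c' t)
    {proj : X → X} (hproj : IsProjOnto proj (rayImage c))
    {κ : ℝ → ℝ} (hκ : Sublinear κ)
    (hcontr : KappaContracting o c proj κ) :
    ¬ (∀ s : ℝ, 0 ≤ s → busemann c (c' s) ≤ 0) := by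
  intro H1
  obtain ⟨n, hn, hcontr'⟩ := hcontr
  obtain ⟨t₁, ht₁, hne⟩ := hdist
  have ht₁pos : 0 < t₁ := by
    rcases lt_or_eq_of_le ht₁ with hp | hp
    · exact hp
    · exact absurd (by rw [← hp, hco, hc'o]) hne
  have hepos : 0 < dist (c t₁) (c' t₁) := dist_pos.2 hne
  obtain ⟨μ, hμ⟩ : ∃ μ : ℝ, μ = dist (c t₁) (c' t₁) / (2 * t₁) := ⟨_, rfl⟩
  have hμpos : 0 < μ := by rw [hμ]; exact div_pos hepos (by linarith)
  have hμe : 2 * μ * t₁ = dist (c t₁) (c' t₁) := by rw [hμ]; field_simp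
  -- linear separation from the ray
  have hsep : ∀ s : ℝ, t₁ ≤ s → ∀ u : ℝ, 0 ≤ u → μ * s ≤ dist (c' s) (c u) := by
    intro s hs u hu
    have hspos : 0 < s := lt_of_lt_of_le ht₁pos hs
    have hss : 2 * μ * s ≤ dist (c s) (c' s) := by
      have h2 := two_rays hX hc hc' (by rw [hco, hc'o]) (lam := t₁ / s)
        (div_nonneg ht₁ hspos.le) ((div_le_one hspos).2 hs) hspos.le
      rw [div_mul_cancel₀ t₁ hspos.ne'] at h2
      have h3 := mul_le_mul_of_nonneg_right h2 hspos.le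
      have h4 : t₁ / s * dist (c s) (c' s) * s = t₁ * dist (c s) (c' s) := by
        field_simp
      rw [h4, ← hμe] at h3
      nlinarith [ht₁pos]
    have e1 : dist (c' s) o = s := by rw [← hc'o, dist_comm]; exact ray_dist hc' hspos.le
    have e2 : dist (c u) o = u := by rw [← hco, dist_comm]; exact ray_dist hc hu
    have habs := abs_le.1 (abs_dist_sub_le (c' s) (c u) o)
    rw [e1, e2] at habs
    have hcu : dist (c s) (c u) = |s - u| := hc s u hspos.le hu
    have htri := dist_triangle (c s) (c u) (c' s)
    rw [dist_comm (c u) (c' s), hcu] at htri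
    rcases le_or_gt (μ * s) |s - u| with hca | hca
    · rcases abs_cases (s - u) with ⟨heq, -⟩ | ⟨heq, -⟩
      · linarith [habs.2]
      · linarith [habs.1]
    · linarith [hss, htri, hca]
  -- sublinearity constants
  obtain ⟨ε, hε⟩ : ∃ ε : ℝ, ε = μ^2 / (4*(n+1)*(2+μ)) := ⟨_, rfl⟩
  have hd4 : (0:ℝ) < 4*(n+1)*(2+μ) := by nlinarith [hn, hμpos]
  have hεpos : 0 < ε := by rw [hε]; exact div_pos (pow_pos hμpos 2) hd4
  have hεe : ε * (4*(n+1)*(2+μ)) = μ^2 := by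
    rw [hε]; exact div_mul_cancel₀ _ hd4.ne'
  have hεsmall : n * ε * (2 + μ) ≤ μ^2 / 4 := by
    nlinarith [hεe, mul_nonneg hεpos.le (by linarith : (0:ℝ) ≤ 2 + μ)]
  obtain ⟨U, hU⟩ := eventually_atTop.1 ((tendsto_order.1 hκ.2).2 ε hεpos)
  have hκε : ∀ u : ℝ, max U 1 ≤ u → κ u ≤ ε * u := by
    intro u hu
    have h1 : (1:ℝ) ≤ u := le_trans (le_max_right _ _) hu
    have h2 := hU u (le_trans (le_max_left _ _) hu)
    rw [div_lt_iff₀ (by linarith)] at h2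
    linarith
  obtain ⟨s₀, hs₀⟩ : ∃ s₀ : ℝ, s₀ = max (max U 1) t₁ := ⟨_, rfl⟩
  have hs₀pos : 0 < s₀ := by
    rw [hs₀]
    exact lt_of_lt_of_le one_pos (le_trans (le_max_right U 1) (le_max_left _ _))
  have hs₀t₁ : t₁ ≤ s₀ := by rw [hs₀]; exact le_max_right _ _
  have hs₀U : max U 1 ≤ s₀ := by rw [hs₀]; exact le_max_left _ _
  obtain ⟨sk, hsk⟩ : ∃ sk : ℕ → ℝ, ∀ k, sk k = s₀ * (1 + μ/2) ^ k := ⟨_, fun _ => rfl⟩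
  have hskpos : ∀ k, 0 < sk k := by
    intro k; rw [hsk]; exact mul_pos hs₀pos (pow_pos (by linarith) k)
  have hsk0 : ∀ k, s₀ ≤ sk k := by
    intro k
    rw [hsk]
    have h1 : (1:ℝ) ≤ (1 + μ/2) ^ k := one_le_pow₀ (by linarith)
    nlinarith [hs₀pos]
  have hsksucc : ∀ k, sk (k+1) = sk k + (μ/2) * sk k := by
    intro k; rw [hsk, hsk, pow_succ]; ring
  have hdo : ∀ s : ℝ, 0 ≤ s → dist o (c' s) = s := by
    intro s hs; rw [← hc'o]; exact ray_dist hc' hs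
  -- balls centered on c' far out are disjoint from the ray c
  have hdisj : ∀ s, s₀ ≤ s → Metric.closedBall (c' s) (μ*s/2) ∩ rayImage c = ∅ := by
    intro s hs
    rw [Set.eq_empty_iff_forall_notMem]
    rintro z ⟨hz1, u, hu, rfl⟩
    rw [Metric.mem_closedBall, dist_comm] at hz1
    have hspos : 0 < s := lt_of_lt_of_le hs₀pos hs
    have := hsep s (le_trans hs₀t₁ hs) u hu
    nlinarith [mul_pos hμpos hspos]
  -- chain along c' : the projection stays sublinearly close to the origin
  have hchain : ∀ k, dist (c 0) (proj (c' (sk k))) ≤ 2*s₀ + (2*n*ε/μ) * (sk k - s₀) := by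
    intro k
    induction k with
    | zero =>
      have h0 : sk 0 = s₀ := by rw [hsk]; simp
      rw [h0]
      have hb1 : dist (c 0) (c' s₀) = s₀ := by
        rw [hco, ← hc'o]; exact ray_dist hc' hs₀pos.le
      have hb1' : dist (c' s₀) (c 0) = s₀ := by rw [dist_comm]; exact hb1
      have hb2 : dist (c' s₀) (proj (c' s₀)) ≤ s₀ :=
        le_trans ((hproj (c' s₀)).2 (c 0) (mem_rayImage le_rfl)) (le_of_eq hb1')
      have htri := dist_triangle (c 0) (c' s₀) (proj (c' s₀))
      have hz : (2*n*ε/μ) * (s₀ - s₀) = 0 := by ring_nf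
      linarith
    | succ k ih =>
      have hsks := hsk0 k
      have hball := hdisj (sk k) hsks
      have hrpos : 0 < μ * sk k / 2 := by nlinarith [mul_pos hμpos (hskpos k)]
      have hmem1 : c' (sk k) ∈ Metric.closedBall (c' (sk k)) (μ * sk k / 2) :=
        Metric.mem_closedBall_self hrpos.le
      have hmem2 : c' (sk (k+1)) ∈ Metric.closedBall (c' (sk k)) (μ * sk k / 2) := by
        rw [Metric.mem_closedBall, hsksucc k]
        have hd : dist (c' (sk k + μ/2 * sk k)) (c' (sk k)) = μ/2 * sk k := by
          rw [hc' _ _ (by nlinarith [hskpos k, hμpos]) (hskpos k).le,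
            show sk k + μ/2 * sk k - sk k = μ/2 * sk k by ring]
          exact abs_of_nonneg (by nlinarith [hμpos.le, (hskpos k).le, mul_nonneg hμpos.le (hskpos k).le])
        rw [hd]; linarith
      have hmove := proj_dist_le hco hproj hcontr' hrpos hball hmem2 hmem1
      rw [hdo (sk k) (hskpos k).le] at hmove
      have hκk : κ (sk k) ≤ ε * sk k := hκε _ (le_trans hs₀U (hsk0 k))
      have hmul : n * κ (sk k) ≤ n * (ε * sk k) := mul_le_mul_of_nonneg_left hκk hn
      have htri := dist_triangle (c 0) (proj (c' (sk k))) (proj (c' (sk (k+1))))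
      rw [dist_comm (proj (c' (sk k))) (proj (c' (sk (k+1))))] at htri
      have halg : (2*n*ε/μ)*(sk (k+1) - s₀) = (2*n*ε/μ)*(sk k - s₀) + n*ε*sk k := by
        rw [hsksucc k]; field_simp; ring
      linarith
  -- choose a large scale
  have hgrow : ∀ k : ℕ, s₀ * (1 + k*(μ/2)) ≤ sk k := by
    intro k
    rw [hsk]
    exact mul_le_mul_of_nonneg_left
      (one_add_mul_le_pow (by linarith : (-2:ℝ) ≤ μ/2) k) hs₀pos.le
  obtain ⟨k, hk⟩ := exists_nat_gt ((4 + 8*s₀) / μ / (s₀ * (μ/2)))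
  have hslarge : 4 + 8*s₀ < μ * sk k := by
    have hsμ : 0 < s₀ * (μ/2) := mul_pos hs₀pos (by linarith)
    have h1 := mul_lt_mul_of_pos_right hk hsμ
    rw [div_mul_cancel₀ _ hsμ.ne'] at h1
    have h1' := mul_lt_mul_of_pos_right h1 hμpos
    rw [div_mul_cancel₀ _ hμpos.ne'] at h1'
    have h3 := mul_le_mul_of_nonneg_left (hgrow k) hμpos.le
    nlinarith [mul_pos hμpos hs₀pos]
  have hs₀s : s₀ ≤ sk k := hsk0 k
  have hspos : 0 < sk k := hskpos k
  have hst₁ : t₁ ≤ sk k := le_trans hs₀t₁ hs₀s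
  -- extract a ray point witnessing busemann ≤ 0
  obtain ⟨t, ht, hlt⟩ := busemann_lt (lt_of_le_of_lt (H1 (sk k) hspos.le) one_pos)
  have hLμ : μ * sk k ≤ dist (c' (sk k)) (c t) := hsep (sk k) hst₁ t ht
  have hLpos : 0 < dist (c' (sk k)) (c t) := lt_of_lt_of_le (mul_pos hμpos hspos) hLμ
  obtain ⟨γ, hγ1, hγ2, hγ3⟩ := hX.1 (c' (sk k)) (c t)
  obtain ⟨lam, hlam⟩ : ∃ lam : ℝ, lam = (μ * sk k/2)/dist (c' (sk k)) (c t) := ⟨_, rfl⟩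
  have hl0 : 0 ≤ lam := by
    rw [hlam]
    exact le_of_lt (div_pos (by nlinarith [mul_pos hμpos hspos]) hLpos)
  have hl1 : lam ≤ 1 := by
    rw [hlam, div_le_one hLpos]; linarith
  have hw1 : dist (c' (sk k)) (γ lam) = μ * sk k/2 := by
    have hh := hγ3 0 ⟨le_rfl, zero_le_one⟩ lam ⟨hl0, hl1⟩
    rw [hγ1, show |0 - lam| = lam by rw [zero_sub, abs_neg]; exact abs_of_nonneg hl0] at hh
    rw [hh, hlam, div_mul_cancel₀ _ hLpos.ne']
  have hw2 : dist (γ lam) (c t) = dist (c' (sk k)) (c t) - μ * sk k/2 := by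
    have hh := hγ3 lam ⟨hl0, hl1⟩ 1 ⟨zero_le_one, le_rfl⟩
    rw [hγ2, show |lam - 1| = 1 - lam by rw [abs_of_nonpos (by linarith)]; ring] at hh
    rw [hh, hlam]
    field_simp
  -- one application of contraction on the connecting geodesic
  have hball := hdisj (sk k) hs₀s
  have hrpos : 0 < μ * sk k/2 := by nlinarith [mul_pos hμpos hspos]
  have hmemw : γ lam ∈ Metric.closedBall (c' (sk k)) (μ * sk k/2) := by
    rw [Metric.mem_closedBall, dist_comm]; exact hw1.le
  have hmemx : c' (sk k) ∈ Metric.closedBall (c' (sk k)) (μ * sk k/2) :=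
    Metric.mem_closedBall_self hrpos.le
  have hmove := proj_dist_le hco hproj hcontr' hrpos hball hmemw hmemx
  rw [hdo (sk k) hspos.le] at hmove
  have hκs : κ (sk k) ≤ ε * sk k := hκε _ (le_trans hs₀U hs₀s)
  have hmul : n * κ (sk k) ≤ n * (ε * sk k) := mul_le_mul_of_nonneg_left hκs hn
  have hTw : dist (c 0) (proj (γ lam)) ≤ 2*s₀ + (2*n*ε/μ)*(sk k - s₀) + n*(ε*sk k) := by
    have htri := dist_triangle (c 0) (proj (c' (sk k))) (proj (γ lam))
    rw [dist_comm (proj (c' (sk k))) (proj (γ lam))] at htri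
    linarith [hchain k]
  have hlow := busemann_ge_neg_param hc hX hproj (γ lam)
  have hup : busemann c (γ lam) ≤ dist (c' (sk k)) (c t) - μ * sk k/2 - t := by
    have hb := busemann_le hc (γ lam) ht
    rw [hw2] at hb
    linarith
  -- final contradiction
  have hfin : μ * sk k/2 ≤ 1 + 2*s₀ + (2*n*ε/μ)*(sk k - s₀) + n*(ε*sk k) := by
    linarith [hlow, hup, hTw, hlt]
  have hfin2 := mul_le_mul_of_nonneg_left hfin hμpos.le
  have hee : μ * ((2*n*ε/μ)*(sk k - s₀)) = 2*n*ε*(sk k - s₀) := by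
    field_simp
  have A1 : 2*n*ε*(sk k - s₀) ≤ 2*n*ε*sk k := by
    nlinarith [mul_nonneg (mul_nonneg hn hεpos.le) hs₀pos.le]
  have A2 : n*ε*(2+μ)*sk k ≤ (μ^2/4)*sk k := mul_le_mul_of_nonneg_right hεsmall hspos.le
  have A2' : 2*n*ε*sk k + μ*(n*(ε*sk k)) ≤ (μ^2/4)*sk k := by nlinarith [A2]
  have B : μ^2*sk k/2 ≤ μ + 2*μ*s₀ + 2*n*ε*(sk k - s₀) + μ*(n*(ε*sk k)) := by
    nlinarith [hfin2, hee]
  have E : μ^2*sk k/4 ≤ μ*(1 + 2*s₀) := by linarith [B, A1, A2']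
  nlinarith [mul_lt_mul_of_pos_left hslarge (show (0:ℝ) < μ/4 by linarith), E]

end Aux4
section Aux5
variable {X : Type*} [MetricSpace X]

set_option maxHeartbeats 1000000 in
lemma not_forall_nonpos' (hX : CAT0Space X) {o : X} {c c' : ℝ → X}
    (hc : IsGeodesicRay c) (hco : c 0 = o)
    (hc' : IsGeodesicRay c') (hc'o : c' 0 = o)
    (hpart1 : Tendsto (fun s => busemann c (c' s)) atTop atTop) :
    ¬ (∀ t : ℝ, 0 ≤ t → busemann c' (c t) ≤ 0) := by
  intro H2
  obtain ⟨s, hG, hs0⟩ :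
      ∃ s : ℝ, 2 ≤ busemann c (c' s) ∧ 0 ≤ s := by
    obtain ⟨s, hs⟩ := ((hpart1.eventually_ge_atTop 2).and (eventually_ge_atTop 0)).exists
    exact ⟨s, hs.1, hs.2⟩
  obtain ⟨T, hTdef⟩ : ∃ T : ℝ, T = s^2 + 5*s + 3 := ⟨_, rfl⟩
  have hT0 : 0 ≤ T := by rw [hTdef]; nlinarith [sq_nonneg s, hs0]
  obtain ⟨u, hu, hud⟩ := busemann_lt (lt_of_le_of_lt (H2 T hT0) one_pos)
  -- hud : dist (c T) (c' u) - u < 1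
  have hTu : T ≤ 2*u + 1 := by
    have h1 : dist (c 0) (c T) = T := ray_dist hc hT0
    have h2 : dist (c 0) (c' u) = u := by
      rw [hco, ← hc'o]; exact ray_dist hc' hu
    have htri := dist_triangle (c 0) (c' u) (c T)
    rw [h1, h2, dist_comm (c' u) (c T)] at htri
    linarith
  have hus : s + 1 ≤ u := by rw [hTdef] at hTu; nlinarith [sq_nonneg s, hs0]
  have hupos : 0 < u := by linarith
  obtain ⟨lam, hlam⟩ : ∃ lam : ℝ, lam = s/u := ⟨_, rfl⟩
  have hl0 : 0 ≤ lam := by rw [hlam]; exact div_nonneg hs0 hupos.le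
  have hl1 : lam ≤ 1 := by rw [hlam, div_le_one hupos]; linarith
  have hlu : lam * u = s := by rw [hlam]; field_simp
  have hCN : dist (c T) (c' (lam * u)) ^2 ≤ (1-lam) * dist (c T) (c' 0)^2
      + lam * dist (c T) (c' u)^2 - lam*(1-lam) * dist (c' 0) (c' u)^2 :=
    hX.2 _ _ _ (seg_ray hc' hupos.le) (c T) lam ⟨hl0, hl1⟩
  rw [hlu, show dist (c T) (c' 0) = T by
      rw [hc'o, ← hco, dist_comm]; exact ray_dist hc hT0,
    ray_dist hc' hu] at hCN
  have hdu : dist (c T) (c' u) ≤ u + 1 := by linarith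
  have hdu0 : (0:ℝ) ≤ dist (c T) (c' u) := dist_nonneg
  have hlu2 : lam^2 * u^2 = s^2 := by rw [← hlu]; ring
  have hTbig : s^2 + 2*s ≤ 2*T := by rw [hTdef]; nlinarith [hs0]
  have hkey : dist (c T) (c' s) ≤ T + 1 := by
    refine le_of_sq_le_sq' ?_ (by linarith)
    nlinarith [hCN, hlu, hlu2, hTbig, hl0, hl1, hs0, hT0, hupos,
      mul_le_mul_of_nonneg_left (pow_le_pow_left₀ hdu0 hdu 2) hl0,
      mul_nonneg hl0 (sq_nonneg T)]
  have hb := busemann_le hc (c' s) hT0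
  rw [dist_comm (c' s) (c T)] at hb
  linarith [hG, hb, hkey]

end Aux5
/-- horofunctions associated to a κ-contracting ray `c` and to a
distinct ray `c'` diverge along each other's rays. -/
theorem horofunctions_diverge_of_contracting
    {X : Type*} [MetricSpace X] [ProperSpace X] [CompleteSpace X]
    (hX : CAT0Space X) (o : X)
    (c : ℝ → X) (hc : IsGeodesicRay c) (hco : c 0 = o)
    (c' : ℝ → X) (hc' : IsGeodesicRay c') (hc'o : c' 0 = o)
    (hdist : ∃ t : ℝ, 0 ≤ t ∧ c t ≠ c' t)
    (proj : X → X) (hproj : IsProjOnto proj (rayImage c))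
    (κ : ℝ → ℝ) (hκ : Sublinear κ)
    (hcontr : KappaContracting o c proj κ)
    (K K' : ℝ) (h h' : X → ℝ)
    (hh : ∀ x, h x = busemann c x + K)
    (hh' : ∀ x, h' x = busemann c' x + K') :
    Tendsto (fun s => h (c' s)) atTop atTop ∧
    Tendsto (fun t => h' (c t)) atTop atTop := by
  have horigin : c' 0 = c 0 := by rw [hco, hc'o]
  have hpos1 : ∃ s₀, 0 < s₀ ∧ 0 < busemann c (c' s₀) := by
    by_contra hcon
    push_neg at hcon
    apply not_forall_nonpos hX hc hco hc' hc'o hdist hproj hκ hcontr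
    intro s hs
    rcases eq_or_lt_of_le hs with heq | hlt
    · rw [← heq, horigin, busemann_origin hc]
    · exact hcon s hlt
  obtain ⟨s₀, hs₀pos, hs₀⟩ := hpos1
  have part1 : Tendsto (fun s => busemann c (c' s)) atTop atTop :=
    bus_tendsto_of_pos hX hc hc' horigin hs₀pos hs₀
  have hpos2 : ∃ t₀, 0 < t₀ ∧ 0 < busemann c' (c t₀) := by
    by_contra hcon
    push_neg at hcon
    apply not_forall_nonpos' hX hc hco hc' hc'o part1
    intro t htle
    rcases eq_or_lt_of_le htle with heq | hlt
    · rw [← heq, horigin.symm, busemann_origin hc']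
    · exact hcon t hlt
  obtain ⟨t₀, ht₀pos, ht₀⟩ := hpos2
  have part2 : Tendsto (fun t => busemann c' (c t)) atTop atTop :=
    bus_tendsto_of_pos hX hc' hc horigin.symm ht₀pos ht₀
  constructor
  · have e : (fun s => h (c' s)) = fun s => busemann c (c' s) + K := by
      funext s; rw [hh]
    rw [e]
    exact tendsto_atTop_add_const_right atTop K part1
  · have e : (fun t => h' (c t)) = fun t => busemann c' (c t) + K' := by
      funext t; rw [hh']
    rw [e]
    exact tendsto_atTop_add_const_right atTop K' part2
end
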